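/- arXiv:math/0611643 — 4 statements merged into one kernel-verified Lean document; each statement's English description precedes it below -/
import Mathlib

section
/- Let A be a commutative noetherian local ring, C a semidualizing A-module, and Y a finitely generated A-module of finite C-dimension. Then the projective dimension of Hom_A(C,Y) is finite and equals the C-dimension of Y: pd_A Hom_A(C,Y) = C-dim Y. -/
open CategoryTheory Opposite

/-- A finitely generated module `C` over a commutative noetherian local ring `A` is
*semidualizing* if the natural ring homomorphism `A → End_A(C)` (sending `a` to
multiplication by `a`) is an isomorphism and `Ext_A^i(C,C) = 0` for every `i > 0`. -/
def IsSemidualizing (A : Type) [CommRing A] (C : Type) [AddCommGroup C] [Module A C] : Prop :=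
  Function.Bijective (algebraMap A (Module.End A C)) ∧
  ∀ i : ℕ, 0 < i →
    Subsingleton (((Ext A (ModuleCat A) i).obj (op (ModuleCat.of A C))).obj (ModuleCat.of A C))

/-- `Y` admits a resolution `0 → C_s → ⋯ → C_0 → Y → 0` of length at most `s` in which
each `C_i` is a finite direct sum of copies of `C`. -/
def HasResolutionByOfLength (A : Type) [CommRing A] (C : Type) [AddCommGroup C] [Module A C]
    (Y : Type) [AddCommGroup Y] [Module A Y] (s : ℕ) : Prop :=
  ∃ (n : ℕ → ℕ) (d : ∀ i : ℕ, ((Fin (n (i + 1)) → C) →ₗ[A] (Fin (n i) → C)))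
    (ε : (Fin (n 0) → C) →ₗ[A] Y),
    (∀ i, s < i → n i = 0) ∧
    Function.Surjective ε ∧ Function.Exact (d 0) ε ∧
    ∀ i : ℕ, Function.Exact (d (i + 1)) (d i)

/-- `Y` has finite `C`-dimension. -/
def HasFiniteCDim (A : Type) [CommRing A] (C : Type) [AddCommGroup C] [Module A C]
    (Y : Type) [AddCommGroup Y] [Module A Y] : Prop :=
  ∃ s : ℕ, HasResolutionByOfLength A C Y s

/-- The `C`-dimension of `Y`: the smallest `s` such that `Y` has a resolution of length `s`
by finite direct sums of copies of `C`. -/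
noncomputable def cDim (A : Type) [CommRing A] (C : Type) [AddCommGroup C] [Module A C]
    (Y : Type) [AddCommGroup Y] [Module A Y] : ℕ :=
  sInf {s | HasResolutionByOfLength A C Y s}


namespace SemidualizingAux

variable {A : Type} [CommRing A]

lemma chain_rec {T : ℕ → Sort*} (Rel : ∀ i, T i → T (i+1) → Prop) (t0 : T 0)
    (step : ∀ i (t : T i), ∃ t', Rel i t t') :
    ∃ u : ∀ i, T i, u 0 = t0 ∧ ∀ i, Rel i (u i) (u (i+1)) := by
  choose f hf using step
  exact ⟨fun i => Nat.rec t0 f i, rfl, fun i => hf i _⟩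

section Hom
variable {C : Type} [AddCommGroup C] [Module A C]

noncomputable def kappa (hC : Function.Bijective (algebraMap A (Module.End A C))) :
    A ≃ₗ[A] Module.End A C :=
  LinearEquiv.ofBijective (Algebra.linearMap A (Module.End A C)) hC

lemma kappa_apply (hC) (a : A) (c : C) : kappa (C := C) hC a c = a • c := by
  show (Algebra.linearMap A (Module.End A C) a) c = a • c
  simp [Module.algebraMap_end_apply]

lemma kappa_symm_smul (hC) (θ : C →ₗ[A] C) (c : C) : ((kappa hC).symm θ) • c = θ c := by
  conv_rhs => rw [← (kappa hC).apply_symm_apply θ]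
  rw [kappa_apply]

/-- `Hom(C, C^k) ≃ A^k` -/
noncomputable def eK (hC : Function.Bijective (algebraMap A (Module.End A C))) (k : ℕ) :
    (C →ₗ[A] (Fin k → C)) ≃ₗ[A] (Fin k → A) where
  toFun φ := fun j => (kappa hC).symm ((LinearMap.proj j) ∘ₗ φ)
  invFun v := LinearMap.pi (fun j => kappa hC (v j))
  map_add' φ ψ := by
    funext j
    show (kappa hC).symm (LinearMap.proj j ∘ₗ (φ + ψ)) = _
    rw [LinearMap.comp_add, map_add]
    rfl
  map_smul' a φ := by
    funext j
    show (kappa hC).symm (LinearMap.proj j ∘ₗ (a • φ)) = _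
    rw [LinearMap.comp_smul, map_smul]
    rfl
  left_inv φ := by
    ext c j
    show LinearMap.pi (fun j => kappa hC ((kappa hC).symm (LinearMap.proj j ∘ₗ φ))) c j = φ c j
    rw [LinearMap.pi_apply, (kappa hC).apply_symm_apply]
    rfl
  right_inv v := by
    funext j
    show (kappa hC).symm (LinearMap.proj j ∘ₗ LinearMap.pi (fun j => kappa hC (v j))) = v j
    rw [LinearMap.proj_pi]
    exact (kappa hC).symm_apply_apply _

lemma eK_smul (hC) (k : ℕ) (φ : C →ₗ[A] (Fin k → C)) (c : C) (j : Fin k) :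
    (eK hC k φ j) • c = φ c j := by
  rw [show eK hC k φ j = (kappa hC).symm ((LinearMap.proj j) ∘ₗ φ) from rfl, kappa_symm_smul]
  rfl

lemma eK_symm_apply (hC) (k : ℕ) (v : Fin k → A) (c : C) :
    (eK hC k).symm v c = fun j => v j • c := by
  funext j
  show LinearMap.pi (fun j => kappa hC (v j)) c j = v j • c
  simp only [LinearMap.pi_apply]
  rw [kappa_apply]


end Hom


lemma projLift {P M N : Type} [AddCommGroup P] [Module A P] [AddCommGroup M] [Module A M]
    [AddCommGroup N] [Module A N] [Module.Projective A P]
    (f : M →ₗ[A] N) (g : P →ₗ[A] N) (h : ∀ x, g x ∈ LinearMap.range f) :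
    ∃ u : P →ₗ[A] M, f ∘ₗ u = g := by
  obtain ⟨u, hu⟩ := Module.projective_lifting_property f.rangeRestrict
    (g.codRestrict (LinearMap.range f) h) f.surjective_rangeRestrict
  exact ⟨u, by ext x; exact congrArg Subtype.val (LinearMap.congr_fun hu x)⟩

variable {C : Type} [AddCommGroup C] [Module A C]
variable (P : ProjectiveResolution (ModuleCat.of A C))

instance projP (i : ℕ) : Module.Projective A (P.complex.X i) :=
  (IsProjective.iff_projective _).2 (by rw [ModuleCat.of_coe]; infer_instance)

/-- The augmentation `P₀ → C`. -/
noncomputable def rho : P.complex.X 0 ⟶ ModuleCat.of A C :=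
  P.π.f 0 ≫ eqToHom (ChainComplex.single₀_obj_zero (ModuleCat.of A C))

/-- `H^{i+1}(Hom(P, W)) = 0`, concretely. -/
def Hvan (W : Type) [AddCommGroup W] [Module A W] (i : ℕ) : Prop :=
  ∀ f : P.complex.X (i+1) →ₗ[A] W, f ∘ₗ (P.complex.d (i+2) (i+1)).hom = 0 →
    ∃ g : P.complex.X i →ₗ[A] W, g ∘ₗ (P.complex.d (i+1) i).hom = f

lemma hvan_of_subsingleton (W : Type) [AddCommGroup W] [Module A W] [Subsingleton W] (i : ℕ) :
    Hvan P W i := by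
  intro f _
  exact ⟨0, by ext x; exact Subsingleton.elim _ _⟩

lemma hvan_C
(hC2 : ∀ i : ℕ, 0 < i →
      Subsingleton (((Ext A (ModuleCat A) i).obj (op (ModuleCat.of A C))).obj (ModuleCat.of A C)))
    (i : ℕ) : Hvan P C i := by
  intro f hf
  set K := P.complex.linearYonedaObj A (ModuleCat.of A C) with hK
  have e := P.isoExt (R := A) (i+1) (ModuleCat.of A C)
  haveI := hC2 (i+1) (by omega)
  haveI : Subsingleton (K.homology (i+1)) :=
    (ConcreteCategory.bijective_of_isIso e.hom).2.subsingleton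
  have hz : Limits.IsZero (K.homology (i+1)) := ModuleCat.isZero_of_subsingleton _
  have hx : K.ExactAt (i+1) := (HomologicalComplex.exactAt_iff_isZero_homology _ _).2 hz
  have hx' := (HomologicalComplex.exactAt_iff' K i (i+1) (i+2) (by simp) (by simp)).1 hx
  obtain ⟨g, hg⟩ := (ShortComplex.moduleCat_exact_iff _).1 hx'
    (show K.X (i+1) from ModuleCat.ofHom f) (ModuleCat.hom_ext hf)
  exact ⟨g.hom, congrArg ModuleCat.Hom.hom hg⟩

lemma hvan_pi {W : Type} [AddCommGroup W] [Module A W] (k : ℕ) (i : ℕ)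
    (hW : Hvan P W i) : Hvan P (Fin k → W) i := by
  intro f hf
  have hcomp : ∀ j : Fin k, ((LinearMap.proj j) ∘ₗ f) ∘ₗ (P.complex.d (i+2) (i+1)).hom = 0 := by
    intro j; ext x
    show f (P.complex.d (i+2) (i+1) x) j = 0
    rw [show f (P.complex.d (i+2) (i+1) x) = 0 from LinearMap.congr_fun hf x]
    rfl
  choose g hg using fun j => hW ((LinearMap.proj j) ∘ₗ f) (hcomp j)
  refine ⟨LinearMap.pi g, ?_⟩
  ext x j
  exact LinearMap.congr_fun (hg j) x

section SES
variable {K M N : Type} [AddCommGroup K] [Module A K] [AddCommGroup M] [Module A M]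
  [AddCommGroup N] [Module A N]
  (ι : K →ₗ[A] M) (pr : M →ₗ[A] N)

/-- Dimension shifting: `H^{j+1}(N)` vanishes if `H^{j+1}(M)` and `H^{j+2}(K)` do. -/
lemma hvan_quot (hι : Function.Injective ι) (hpr : Function.Surjective pr)
    (hex : Function.Exact ι pr)
    (j : ℕ) (hM : Hvan P M j) (hK : Hvan P K (j+1)) : Hvan P N j := by
  intro f hf
  -- lift f through pr
  obtain ⟨g, hg⟩ := projLift (P := P.complex.X (j+1)) pr f
    (fun x => by rw [LinearMap.range_eq_top.2 hpr]; trivial)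
  -- g ∘ d lands in the image of ι
  obtain ⟨k, hk⟩ := projLift (P := P.complex.X (j+2)) ι (g ∘ₗ (P.complex.d (j+2) (j+1)).hom)
    (fun x => by
      have h0 : pr ((g ∘ₗ (P.complex.d (j+2) (j+1)).hom) x) = 0 :=
        (show pr (g (P.complex.d (j+2) (j+1) x)) = f (P.complex.d (j+2) (j+1) x) from
          LinearMap.congr_fun hg _).trans
          (show f (P.complex.d (j+2) (j+1) x) = 0 from LinearMap.congr_fun hf x)
      obtain ⟨y, hy⟩ := (hex _).1 h0
      exact LinearMap.mem_range.2 ⟨y, hy⟩)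
  -- k is a cocycle
  have hkc : k ∘ₗ (P.complex.d (j+3) (j+2)).hom = 0 := by
    ext x
    apply hι
    show ι (k (P.complex.d (j+3) (j+2) x)) = ι ((0 : _ →ₗ[A] K) x)
    rw [LinearMap.zero_apply, map_zero]
    refine (show ι (k (P.complex.d (j+3) (j+2) x))
        = g (P.complex.d (j+2) (j+1) (P.complex.d (j+3) (j+2) x)) from
      LinearMap.congr_fun hk _).trans ?_
    have hdd : (P.complex.d (j+3) (j+2) ≫ P.complex.d (j+2) (j+1)) x = 0 := by
      rw [P.complex.d_comp_d]; rfl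
    rw [show P.complex.d (j+2) (j+1) (P.complex.d (j+3) (j+2) x) = 0 from hdd]
    exact map_zero g
  obtain ⟨k', hk'⟩ := hK k hkc
  -- g - ι k' is a cocycle in M
  have hgc : (g - ι ∘ₗ k') ∘ₗ (P.complex.d (j+2) (j+1)).hom = 0 := by
    ext x
    show g (P.complex.d (j+2) (j+1) x) - ι (k' (P.complex.d (j+2) (j+1) x)) = (0 : _ →ₗ[A] M) x
    rw [LinearMap.zero_apply,
      show k' (P.complex.d (j+2) (j+1) x) = k x from LinearMap.congr_fun hk' x,
      show ι (k x) = g (P.complex.d (j+2) (j+1) x) from LinearMap.congr_fun hk x]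
    exact sub_self _
  obtain ⟨h, hh⟩ := hM (g - ι ∘ₗ k') hgc
  refine ⟨pr ∘ₗ h, ?_⟩
  ext x
  show pr (h (P.complex.d (j+1) j x)) = f x
  rw [show h (P.complex.d (j+1) j x) = (g - ι ∘ₗ k') x from LinearMap.congr_fun hh x]
  show pr (g x - ι (k' x)) = f x
  rw [map_sub, (hex (ι (k' x))).2 ⟨k' x, rfl⟩,
    show pr (g x) = f x from LinearMap.congr_fun hg x]
  exact sub_zero _

/-- surjectivity of `Hom(C,M) → Hom(C,N)` when `H^1(K) = 0`. -/
lemma hom_surj (hι : Function.Injective ι) (hpr : Function.Surjective pr)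
    (hex : Function.Exact ι pr) (hK : Hvan P K 0) (φ : C →ₗ[A] N) :
    ∃ ψ : C →ₗ[A] M, pr ∘ₗ ψ = φ := by
  classical
  set ρ : P.complex.X 0 →ₗ[A] C := (rho P).hom with hρdef
  have hρsurj : Function.Surjective ρ := by
    have : Epi (rho P) := epi_comp _ _
    exact (ModuleCat.epi_iff_surjective (rho P)).1 this
  have hρd : ∀ x : P.complex.X 1, ρ (P.complex.d 1 0 x) = 0 := by
    intro x
    have h : P.complex.d 1 0 ≫ rho P = 0 := by
      rw [rho, ← Category.assoc, P.complex_d_comp_π_f_zero, Limits.zero_comp]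
    calc ρ (P.complex.d 1 0 x) = (P.complex.d 1 0 ≫ rho P) x := rfl
    _ = 0 := by rw [h]; rfl
  have hρexact : ∀ x : P.complex.X 0, ρ x = 0 → ∃ y, P.complex.d 1 0 y = x := by
    intro x hx
    have h2 : Function.Injective
        (eqToHom (ChainComplex.single₀_obj_zero (ModuleCat.of A C))) :=
      (ModuleCat.mono_iff_injective _).1 inferInstance
    have : P.π.f 0 x = 0 := by
      apply h2
      rw [map_zero]; exact hx
    exact (ShortComplex.moduleCat_exact_iff _).1 P.exact₀ x this
  -- lift φ ∘ ρ through pr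
  obtain ⟨u, hu⟩ := projLift (P := P.complex.X 0) pr (φ ∘ₗ ρ)
    (fun x => by rw [LinearMap.range_eq_top.2 hpr]; trivial)
  -- u ∘ d lands in the image of ι
  obtain ⟨k, hk⟩ := projLift (P := P.complex.X 1) ι (u ∘ₗ (P.complex.d 1 0).hom)
    (fun x => by
      have h0 : pr ((u ∘ₗ (P.complex.d 1 0).hom) x) = 0 := by
        refine (show pr (u (P.complex.d 1 0 x)) = φ (ρ (P.complex.d 1 0 x)) from
          LinearMap.congr_fun hu _).trans ?_
        rw [hρd x, map_zero]
      obtain ⟨y, hy⟩ := (hex _).1 h0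
      exact LinearMap.mem_range.2 ⟨y, hy⟩)
  -- k is a cocycle
  have hkc : k ∘ₗ (P.complex.d 2 1).hom = 0 := by
    ext x
    apply hι
    show ι (k (P.complex.d 2 1 x)) = ι ((0 : _ →ₗ[A] K) x)
    rw [LinearMap.zero_apply, map_zero]
    refine (show ι (k (P.complex.d 2 1 x)) = u (P.complex.d 1 0 (P.complex.d 2 1 x)) from
      LinearMap.congr_fun hk _).trans ?_
    have hdd : (P.complex.d 2 1 ≫ P.complex.d 1 0) x = 0 := by
      rw [P.complex.d_comp_d]; rfl
    rw [show P.complex.d 1 0 (P.complex.d 2 1 x) = 0 from hdd]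
    exact map_zero u
  obtain ⟨v, hv⟩ := hK k hkc
  set w : P.complex.X 0 →ₗ[A] M := u - ι ∘ₗ v with hw
  have hwd : ∀ y : P.complex.X 1, w (P.complex.d 1 0 y) = 0 := by
    intro y
    show u (P.complex.d 1 0 y) - ι (v (P.complex.d 1 0 y)) = 0
    rw [show v (P.complex.d 1 0 y) = k y from LinearMap.congr_fun hv y,
      show ι (k y) = u (P.complex.d 1 0 y) from LinearMap.congr_fun hk y]
    exact sub_self _
  -- w kills ker ρ, so factors through C
  have hker : LinearMap.ker ρ ≤ LinearMap.ker w := by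
    intro x hx
    obtain ⟨y, hy⟩ := hρexact x (LinearMap.mem_ker.1 hx)
    rw [LinearMap.mem_ker, ← hy]
    exact hwd y
  set q : (P.complex.X 0 ⧸ LinearMap.ker ρ) →ₗ[A] C :=
    Submodule.liftQ (LinearMap.ker ρ) ρ (le_refl _) with hq
  have hqbij : Function.Bijective q := by
    constructor
    · rw [← LinearMap.ker_eq_bot, hq, Submodule.ker_liftQ_eq_bot _ _ _ (le_refl _)]
    · intro c
      obtain ⟨x, hx⟩ := hρsurj c
      exact ⟨Submodule.Quotient.mk x, hx⟩
  set eq := LinearEquiv.ofBijective q hqbij with heq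
  refine ⟨(Submodule.liftQ (LinearMap.ker ρ) w hker) ∘ₗ (eq.symm : C →ₗ[A] _), ?_⟩
  ext c
  obtain ⟨x, hx⟩ := hρsurj c
  have hsymm : eq.symm c = Submodule.Quotient.mk x := by
    apply eq.injective
    rw [LinearEquiv.apply_symm_apply]
    show c = q (Submodule.Quotient.mk x)
    rw [hq, Submodule.liftQ_apply, hx]
  show pr (Submodule.liftQ (LinearMap.ker ρ) w hker (eq.symm c)) = φ c
  rw [hsymm, Submodule.liftQ_apply]
  show pr (u x - ι (v x)) = φ c
  rw [map_sub, (hex (ι (v x))).2 ⟨v x, rfl⟩, sub_zero,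
    show pr (u x) = φ (ρ x) from LinearMap.congr_fun hu x, hx]

end SES

section Resolution
variable {Y : Type} [AddCommGroup Y] [Module A Y]
variable {n : ℕ → ℕ} (d : ∀ i : ℕ, ((Fin (n (i + 1)) → C) →ₗ[A] (Fin (n i) → C)))
  (ε : (Fin (n 0) → C) →ₗ[A] Y)

lemma exact_subtype_codRestrict {M : Type} [AddCommGroup M] [Module A M]
    {N : Type} [AddCommGroup N] [Module A N] (f : M →ₗ[A] N) (p : Submodule A N)
    (h : ∀ x, f x ∈ p) :
    Function.Exact (LinearMap.ker f).subtype (f.codRestrict p h) := by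
  intro x
  constructor
  · intro hx
    have : f x = 0 := by
      have := congrArg Subtype.val hx
      exact this
    exact ⟨⟨x, LinearMap.mem_ker.2 this⟩, rfl⟩
  · rintro ⟨⟨y, hy⟩, rfl⟩
    exact Subtype.ext (LinearMap.mem_ker.1 hy)

lemma hvan_ker (hvC : ∀ k i, Hvan P (Fin k → C) i)
    (hd : ∀ i, Function.Exact (d (i+1)) (d i)) {s : ℕ} (htail : ∀ i, s < i → n i = 0) :
    ∀ j i, Hvan P (↥(LinearMap.ker (d j))) i := by
  have key : ∀ t j, s ≤ j + t → ∀ i, Hvan P (↥(LinearMap.ker (d j))) i := by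
    intro t
    induction t with
    | zero =>
      intro j hj i
      have hn : n (j+1) = 0 := htail _ (by omega)
      haveI : Subsingleton (Fin (n (j+1)) → C) := by
        refine ⟨fun a b => funext fun m => ?_⟩
        exact absurd m.2 (by omega)
      haveI : Subsingleton ↥(LinearMap.ker (d j)) :=
        ⟨fun a b => Subtype.ext (Subsingleton.elim _ _)⟩
      exact hvan_of_subsingleton P _ i
    | succ t IH =>
      intro j hj i
      by_cases h : s ≤ j + t
      · exact IH j h i
      · have h1 := IH (j+1) (by omega)
        have hmem : ∀ x, d (j+1) x ∈ LinearMap.ker (d j) :=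
          fun x => LinearMap.mem_ker.2 ((hd j).apply_apply_eq_zero x)
        refine hvan_quot P (LinearMap.ker (d (j+1))).subtype
          ((d (j+1)).codRestrict (LinearMap.ker (d j)) hmem)
          Subtype.val_injective ?_ (exact_subtype_codRestrict _ _ _) i (hvC _ i) (h1 (i+1))
        rintro ⟨y, hy⟩
        obtain ⟨x, hx⟩ := (hd j y).1 (LinearMap.mem_ker.1 hy)
        exact ⟨x, Subtype.ext hx⟩
  exact fun j i => key s j (Nat.le_add_left s j) i

lemma hvan_kerEps (hvC : ∀ k i, Hvan P (Fin k → C) i)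
    (hde : Function.Exact (d 0) ε)
    (hd : ∀ i, Function.Exact (d (i+1)) (d i)) {s : ℕ} (htail : ∀ i, s < i → n i = 0) :
    ∀ i, Hvan P (↥(LinearMap.ker ε)) i := by
  intro i
  have hmem : ∀ x, d 0 x ∈ LinearMap.ker ε :=
    fun x => LinearMap.mem_ker.2 (hde.apply_apply_eq_zero x)
  refine hvan_quot P (LinearMap.ker (d 0)).subtype
    ((d 0).codRestrict (LinearMap.ker ε) hmem)
    Subtype.val_injective ?_ (exact_subtype_codRestrict _ _ _) i (hvC _ i)
    (hvan_ker P d hvC hd htail 0 (i+1))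
  rintro ⟨y, hy⟩
  obtain ⟨x, hx⟩ := (hde y).1 (LinearMap.mem_ker.1 hy)
  exact ⟨x, Subtype.ext hx⟩

lemma exact_subtype_eps (hε : Function.Surjective ε) :
    Function.Exact (LinearMap.ker ε).subtype ε := by
  intro x
  constructor
  · intro hx
    exact ⟨⟨x, LinearMap.mem_ker.2 hx⟩, rfl⟩
  · rintro ⟨⟨y, hy⟩, rfl⟩
    exact LinearMap.mem_ker.1 hy

/-- `Hom(C, -)` applied to the augmentation is surjective. -/
lemma homC_eps_surj (hvC : ∀ k i, Hvan P (Fin k → C) i)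
    (hε : Function.Surjective ε) (hde : Function.Exact (d 0) ε)
    (hd : ∀ i, Function.Exact (d (i+1)) (d i)) {s : ℕ} (htail : ∀ i, s < i → n i = 0)
    (φ : C →ₗ[A] Y) : ∃ ψ : C →ₗ[A] (Fin (n 0) → C), ε ∘ₗ ψ = φ :=
  hom_surj P (LinearMap.ker ε).subtype ε Subtype.val_injective hε
    (exact_subtype_eps ε hε) (hvan_kerEps P d ε hvC hde hd htail 0) φ

/-- exactness of `Hom(C,-)` at degree 0. -/
lemma homC_exact0 (hvC : ∀ k i, Hvan P (Fin k → C) i)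
    (hde : Function.Exact (d 0) ε)
    (hd : ∀ i, Function.Exact (d (i+1)) (d i)) {s : ℕ} (htail : ∀ i, s < i → n i = 0)
    (φ : C →ₗ[A] (Fin (n 0) → C)) (hφ : ε ∘ₗ φ = 0) :
    ∃ ψ : C →ₗ[A] (Fin (n 1) → C), (d 0) ∘ₗ ψ = φ := by
  have hmem : ∀ x, d 0 x ∈ LinearMap.ker ε :=
    fun x => LinearMap.mem_ker.2 (hde.apply_apply_eq_zero x)
  have hsurj : Function.Surjective ((d 0).codRestrict (LinearMap.ker ε) hmem) := by
    rintro ⟨y, hy⟩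
    obtain ⟨x, hx⟩ := (hde y).1 (LinearMap.mem_ker.1 hy)
    exact ⟨x, Subtype.ext hx⟩
  obtain ⟨ψ, hψ⟩ := hom_surj P (LinearMap.ker (d 0)).subtype
    ((d 0).codRestrict (LinearMap.ker ε) hmem) Subtype.val_injective hsurj
    (exact_subtype_codRestrict _ _ _) (hvan_ker P d hvC hd htail 0 0)
    (φ.codRestrict (LinearMap.ker ε) (fun c => LinearMap.mem_ker.2 (LinearMap.congr_fun hφ c)))
  refine ⟨ψ, ?_⟩
  ext c j
  exact congrFun (congrArg Subtype.val (LinearMap.congr_fun hψ c)) j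

/-- exactness of `Hom(C,-)` at positive degrees. -/
lemma homC_exact_succ (hvC : ∀ k i, Hvan P (Fin k → C) i)
    (hd : ∀ i, Function.Exact (d (i+1)) (d i)) {s : ℕ} (htail : ∀ i, s < i → n i = 0)
    (i : ℕ) (φ : C →ₗ[A] (Fin (n (i+1)) → C)) (hφ : (d i) ∘ₗ φ = 0) :
    ∃ ψ : C →ₗ[A] (Fin (n (i+2)) → C), (d (i+1)) ∘ₗ ψ = φ := by
  have hmem : ∀ x, d (i+1) x ∈ LinearMap.ker (d i) :=
    fun x => LinearMap.mem_ker.2 ((hd i).apply_apply_eq_zero x)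
  have hsurj : Function.Surjective ((d (i+1)).codRestrict (LinearMap.ker (d i)) hmem) := by
    rintro ⟨y, hy⟩
    obtain ⟨x, hx⟩ := (hd i y).1 (LinearMap.mem_ker.1 hy)
    exact ⟨x, Subtype.ext hx⟩
  obtain ⟨ψ, hψ⟩ := hom_surj P (LinearMap.ker (d (i+1))).subtype
    ((d (i+1)).codRestrict (LinearMap.ker (d i)) hmem) Subtype.val_injective hsurj
    (exact_subtype_codRestrict _ _ _) (hvan_ker P d hvC hd htail (i+1) 0)
    (φ.codRestrict (LinearMap.ker (d i)) (fun c => LinearMap.mem_ker.2 (LinearMap.congr_fun hφ c)))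
  refine ⟨ψ, ?_⟩
  ext c j
  exact congrFun (congrArg Subtype.val (LinearMap.congr_fun hψ c)) j

end Resolution


section Tm
variable (C : Type) [AddCommGroup C] [Module A C]

/-- "tensoring with C": replace a matrix over `A` acting on `A^k` by the same matrix acting
on `C^k`. -/
noncomputable def Tmap {k l : ℕ} (D : (Fin k → A) →ₗ[A] (Fin l → A)) :
    (Fin k → C) →ₗ[A] (Fin l → C) :=
  LinearMap.pi (fun j => ∑ i, D (Pi.single i 1) j • LinearMap.proj i)

lemma Tmap_apply {k l : ℕ} (D : (Fin k → A) →ₗ[A] (Fin l → A)) (x : Fin k → C) (j : Fin l) :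
    Tmap C D x j = ∑ i, D (Pi.single i 1) j • x i := by
  simp [Tmap]

lemma Tmap_single {k l : ℕ} (D : (Fin k → A) →ₗ[A] (Fin l → A)) (i : Fin k) (c : C) (j : Fin l) :
    Tmap C D (Pi.single i c) j = D (Pi.single i 1) j • c := by
  rw [Tmap_apply]
  rw [Finset.sum_eq_single i]
  · rw [Pi.single_eq_same]
  · intro b _ hb
    rw [Pi.single_eq_of_ne hb, smul_zero]
  · intro h; exact absurd (Finset.mem_univ i) h

lemma Tmap_id {k : ℕ} : Tmap C (LinearMap.id : (Fin k → A) →ₗ[A] _) = LinearMap.id := by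
  refine LinearMap.ext fun x => funext fun j => ?_
  rw [show (Tmap C (LinearMap.id : (Fin k → A) →ₗ[A] _)) x j
    = ∑ i, (Pi.single i (1:A) : Fin k → A) j • x i from Tmap_apply C _ x j]
  show _ = x j
  rw [Finset.sum_eq_single j]
  · rw [Pi.single_eq_same, one_smul]
  · intro b _ hb
    rw [Pi.single_eq_of_ne hb.symm, zero_smul]
  · intro h; exact absurd (Finset.mem_univ j) h

lemma Tmap_sub {k l : ℕ} (D D' : (Fin k → A) →ₗ[A] (Fin l → A)) :
    Tmap C (D - D') = Tmap C D - Tmap C D' := by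
  refine LinearMap.ext fun x => funext fun j => ?_
  show Tmap C (D - D') x j = Tmap C D x j - Tmap C D' x j
  rw [Tmap_apply, Tmap_apply, Tmap_apply, ← Finset.sum_sub_distrib]
  congr 1
  funext i
  rw [LinearMap.sub_apply, Pi.sub_apply, sub_smul]

lemma Tmap_add {k l : ℕ} (D D' : (Fin k → A) →ₗ[A] (Fin l → A)) :
    Tmap C (D + D') = Tmap C D + Tmap C D' := by
  refine LinearMap.ext fun x => funext fun j => ?_
  show Tmap C (D + D') x j = Tmap C D x j + Tmap C D' x j
  rw [Tmap_apply, Tmap_apply, Tmap_apply, ← Finset.sum_add_distrib]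
  congr 1
  funext i
  rw [LinearMap.add_apply, Pi.add_apply, add_smul]

lemma Tmap_comp {k l m : ℕ} (D : (Fin k → A) →ₗ[A] (Fin l → A))
    (E : (Fin l → A) →ₗ[A] (Fin m → A)) :
    Tmap C (E ∘ₗ D) = Tmap C E ∘ₗ Tmap C D := by
  refine LinearMap.ext fun x => funext fun j => ?_
  show Tmap C (E ∘ₗ D) x j = Tmap C E (Tmap C D x) j
  rw [Tmap_apply, Tmap_apply]
  have hED : ∀ i : Fin k, (E ∘ₗ D) (Pi.single i 1) j
      = ∑ jj : Fin l, D (Pi.single i 1) jj * E (Pi.single jj 1) j := by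
    intro i
    show E (D (Pi.single i 1)) j = _
    conv_lhs => rw [← Finset.univ_sum_single (D (Pi.single i 1))]
    rw [map_sum]
    simp only [Finset.sum_apply]
    congr 1
    funext jj
    have hsingle : (Pi.single jj (D (Pi.single i 1) jj) : Fin l → A)
        = (D (Pi.single i 1) jj) • (Pi.single jj (1:A) : Fin l → A) := by
      rw [← Pi.single_smul, smul_eq_mul, mul_one]
    rw [hsingle, map_smul]
    rfl
  calc ∑ i, (E ∘ₗ D) (Pi.single i 1) j • x i
      = ∑ i, ∑ jj, (D (Pi.single i 1) jj * E (Pi.single jj 1) j) • x i := by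
        congr 1; funext i; rw [hED, Finset.sum_smul]
    _ = ∑ jj, ∑ i, (D (Pi.single i 1) jj * E (Pi.single jj 1) j) • x i := Finset.sum_comm
    _ = ∑ jj, E (Pi.single jj 1) j • Tmap C D x jj := by
        congr 1; funext jj
        rw [Tmap_apply, Finset.smul_sum]
        congr 1; funext i
        rw [smul_smul, mul_comm]
  

end Tm

section TeK
variable {C : Type} [AddCommGroup C] [Module A C]

lemma eK_symm_single (hC1 : Function.Bijective (algebraMap A (Module.End A C))) {k : ℕ}
    (i : Fin k) (c : C) :
    (eK hC1 k).symm (Pi.single i (1:A)) c = Pi.single i c := by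
  rw [eK_symm_apply]
  funext j
  by_cases h : j = i
  · subst h
    rw [Pi.single_eq_same, Pi.single_eq_same, one_smul]
  · rw [Pi.single_eq_of_ne h, Pi.single_eq_of_ne h, zero_smul]

lemma Tmap_eK (hC1 : Function.Bijective (algebraMap A (Module.End A C))) {k l : ℕ}
    (dd : (Fin k → C) →ₗ[A] (Fin l → C)) :
    Tmap C ((eK hC1 l).toLinearMap ∘ₗ
      (LinearMap.llcomp A C (Fin k → C) (Fin l → C) dd) ∘ₗ (eK hC1 k).symm.toLinearMap) = dd := by
  set D := (eK hC1 l).toLinearMap ∘ₗ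
    (LinearMap.llcomp A C (Fin k → C) (Fin l → C) dd) ∘ₗ (eK hC1 k).symm.toLinearMap with hD
  have hsingle : ∀ (i : Fin k) (c : C), Tmap C D (Pi.single i c) = dd (Pi.single i c) := by
    intro i c
    funext j
    rw [Tmap_single]
    have h1 : D (Pi.single i 1) = eK hC1 l (dd ∘ₗ (eK hC1 k).symm (Pi.single i 1)) := rfl
    rw [h1, eK_smul]
    show dd ((eK hC1 k).symm (Pi.single i (1:A)) c) j = _
    rw [eK_symm_single]
  refine LinearMap.ext fun x => ?_
  conv_lhs => rw [show x = ∑ i, Pi.single i (x i) from (Finset.univ_sum_single x).symm]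
  conv_rhs => rw [show x = ∑ i, Pi.single i (x i) from (Finset.univ_sum_single x).symm]
  rw [map_sum, map_sum]
  exact Finset.sum_congr rfl (fun i _ => hsingle i (x i))

end TeK

section Transport

lemma exact_equiv {M M' N N' L L' : Type}
    [AddCommGroup M] [Module A M] [AddCommGroup M'] [Module A M']
    [AddCommGroup N] [Module A N] [AddCommGroup N'] [Module A N']
    [AddCommGroup L] [Module A L] [AddCommGroup L'] [Module A L']
    (f : M →ₗ[A] N) (g : N →ₗ[A] L) (h : Function.Exact f g)
    (eM : M' ≃ₗ[A] M) (eN : N ≃ₗ[A] N') (eL : L ≃ₗ[A] L') :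
    Function.Exact (eN.toLinearMap ∘ₗ f ∘ₗ eM.toLinearMap)
      (eL.toLinearMap ∘ₗ g ∘ₗ eN.symm.toLinearMap) := by
  intro y
  constructor
  · intro hy
    have h0 : g (eN.symm y) = 0 := by
      apply eL.injective
      rw [map_zero]
      exact hy
    obtain ⟨x, hx⟩ := (h _).1 h0
    refine ⟨eM.symm x, ?_⟩
    show eN (f (eM (eM.symm x))) = y
    rw [eM.apply_symm_apply, hx, eN.apply_symm_apply]
  · rintro ⟨x, rfl⟩
    show eL (g (eN.symm (eN (f (eM x))))) = 0
    rw [eN.symm_apply_apply, (h (f (eM x))).2 ⟨eM x, rfl⟩, map_zero]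

end Transport

section ExistsF
variable {C : Type} [AddCommGroup C] [Module A C]
variable (P : ProjectiveResolution (ModuleCat.of A C))
variable {Y : Type} [AddCommGroup Y] [Module A Y]
variable {n : ℕ → ℕ} (d : ∀ i : ℕ, ((Fin (n (i + 1)) → C) →ₗ[A] (Fin (n i) → C)))
  (ε : (Fin (n 0) → C) →ₗ[A] Y)

/-- The free resolution of `Hom(C,Y)` obtained by applying `Hom(C,-)` to a `C`-resolution. -/
lemma exists_F (hC1 : Function.Bijective (algebraMap A (Module.End A C)))
    (hvC : ∀ k i, Hvan P (Fin k → C) i)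
    (hε : Function.Surjective ε) (hde : Function.Exact (d 0) ε)
    (hd : ∀ i, Function.Exact (d (i+1)) (d i)) {s : ℕ} (htail : ∀ i, s < i → n i = 0) :
    ∃ (DF : ∀ i : ℕ, ((Fin (n (i+1)) → A) →ₗ[A] (Fin (n i) → A)))
      (EF : (Fin (n 0) → A) →ₗ[A] (C →ₗ[A] Y)),
      Function.Surjective EF ∧ Function.Exact (DF 0) EF ∧
      (∀ i : ℕ, Function.Exact (DF (i+1)) (DF i)) ∧
      (∀ i : ℕ, Tmap C (DF i) = d i) := by
  set DF : ∀ i : ℕ, ((Fin (n (i+1)) → A) →ₗ[A] (Fin (n i) → A)) := fun i =>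
    (eK hC1 (n i)).toLinearMap ∘ₗ
      (LinearMap.llcomp A C (Fin (n (i+1)) → C) (Fin (n i) → C) (d i)) ∘ₗ
      (eK hC1 (n (i+1))).symm.toLinearMap with hDF
  set EF : (Fin (n 0) → A) →ₗ[A] (C →ₗ[A] Y) :=
    (LinearMap.llcomp A C (Fin (n 0) → C) Y ε) ∘ₗ (eK hC1 (n 0)).symm.toLinearMap with hEF
  -- Hom-level exactness
  have hHiex : ∀ i : ℕ, Function.Exact
      (LinearMap.llcomp (σ₁₂ := RingHom.id A) (σ₁₃ := RingHom.id A) A C (Fin (n (i+2)) → C) (Fin (n (i+1)) → C) (d (i+1)))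
      (LinearMap.llcomp (σ₁₂ := RingHom.id A) (σ₁₃ := RingHom.id A) A C (Fin (n (i+1)) → C) (Fin (n i) → C) (d i)) := by
    intro i φ
    constructor
    · intro hφ
      obtain ⟨ψ, hψ⟩ := homC_exact_succ P d hvC hd htail i φ hφ
      exact ⟨ψ, hψ⟩
    · rintro ⟨ψ, rfl⟩
      show (d i) ∘ₗ ((d (i+1)) ∘ₗ ψ) = 0
      ext c j
      show (d i) ((d (i+1)) (ψ c)) j = _
      rw [(hd i).apply_apply_eq_zero (ψ c)]
      rfl
  have hH0ex : Function.Exact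
      (LinearMap.llcomp (σ₁₂ := RingHom.id A) (σ₁₃ := RingHom.id A) A C (Fin (n 1) → C) (Fin (n 0) → C) (d 0))
      (LinearMap.llcomp (σ₁₂ := RingHom.id A) (σ₁₃ := RingHom.id A) A C (Fin (n 0) → C) Y ε) := by
    intro φ
    constructor
    · intro hφ
      obtain ⟨ψ, hψ⟩ := homC_exact0 P d ε hvC hde hd htail φ hφ
      exact ⟨ψ, hψ⟩
    · rintro ⟨ψ, rfl⟩
      show ε ∘ₗ ((d 0) ∘ₗ ψ) = 0
      ext c
      show ε ((d 0) (ψ c)) = _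
      rw [hde.apply_apply_eq_zero (ψ c)]
      rfl
  refine ⟨DF, EF, ?_, ?_, ?_, ?_⟩
  · -- surjectivity of EF
    intro φ
    obtain ⟨ψ, hψ⟩ := homC_eps_surj P d ε hvC hε hde hd htail φ
    exact ⟨eK hC1 (n 0) ψ, by
      show (LinearMap.llcomp A C (Fin (n 0) → C) Y ε) ((eK hC1 (n 0)).symm (eK hC1 (n 0) ψ)) = φ
      rw [(eK hC1 (n 0)).symm_apply_apply]
      exact hψ⟩
  · -- Exact (DF 0) EF
    have h1 := exact_equiv _ _ hH0ex (eK hC1 (n 1)).symm (eK hC1 (n 0))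
      (LinearEquiv.refl A (C →ₗ[A] Y))
    intro y
    rw [hEF, hDF]
    constructor
    · intro hy
      exact (h1 y).1 (by
        show (LinearEquiv.refl A (C →ₗ[A] Y)) (((LinearMap.llcomp A C (Fin (n 0) → C) Y ε) ∘ₗ
          (eK hC1 (n 0)).symm.toLinearMap) y) = 0
        rw [LinearEquiv.refl_apply]
        exact hy)
    · intro hy
      have := (h1 y).2 hy
      rw [show (LinearEquiv.refl A (C →ₗ[A] Y)).toLinearMap ∘ₗ
        (LinearMap.llcomp A C (Fin (n 0) → C) Y ε) ∘ₗ (eK hC1 (n 0)).symm.toLinearMap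
        = (LinearMap.llcomp A C (Fin (n 0) → C) Y ε) ∘ₗ (eK hC1 (n 0)).symm.toLinearMap from
          by ext z; rfl] at this
      exact this
  · -- Exact (DF (i+1)) (DF i)
    intro i
    exact exact_equiv _ _ (hHiex i) (eK hC1 (n (i+2))).symm (eK hC1 (n (i+1))) (eK hC1 (n i))
  · intro i
    exact Tmap_eK hC1 (d i)

end ExistsF

section Comparison
variable {X : Type} [AddCommGroup X] [Module A X]

/-- comparison map between two free resolutions of `X`. -/
lemma chainMap_exists {n m : ℕ → ℕ}
    (DF : ∀ i : ℕ, ((Fin (n (i+1)) → A) →ₗ[A] (Fin (n i) → A)))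
    (EF : (Fin (n 0) → A) →ₗ[A] X)
    (DG : ∀ i : ℕ, ((Fin (m (i+1)) → A) →ₗ[A] (Fin (m i) → A)))
    (EG : (Fin (m 0) → A) →ₗ[A] X)
    (hEFs : Function.Surjective EF) (hEF : Function.Exact (DF 0) EF)
    (hDF : ∀ i, Function.Exact (DF (i+1)) (DF i))
    (hEG0 : ∀ x, EG (DG 0 x) = 0) (hDG0 : ∀ i x, DG i (DG (i+1) x) = 0) :
    ∃ u : ∀ i, ((Fin (m i) → A) →ₗ[A] (Fin (n i) → A)),
      EF ∘ₗ u 0 = EG ∧ ∀ i, DF i ∘ₗ u (i+1) = u i ∘ₗ DG i := by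
  obtain ⟨u0, hu0⟩ := projLift (P := Fin (m 0) → A) EF EG
    (fun x => by rw [LinearMap.range_eq_top.2 hEFs]; trivial)
  have hu0inv : ∀ x, (u0 ∘ₗ DG 0) x ∈ LinearMap.range (DF 0) := by
    intro x
    have h0 : EF (u0 (DG 0 x)) = 0 := by
      rw [show EF (u0 (DG 0 x)) = EG (DG 0 x) from LinearMap.congr_fun hu0 _]
      exact hEG0 x
    obtain ⟨y, hy⟩ := (hEF _).1 h0
    exact ⟨y, hy⟩
  obtain ⟨u, hu0', hrel⟩ := chain_rec
    (T := fun i => {ui : (Fin (m i) → A) →ₗ[A] (Fin (n i) → A) //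
      ∀ x, (ui ∘ₗ DG i) x ∈ LinearMap.range (DF i)})
    (Rel := fun i t t' => DF i ∘ₗ t'.1 = t.1 ∘ₗ DG i)
    ⟨u0, hu0inv⟩
    (fun i t => by
      obtain ⟨ui1, hui1⟩ := projLift (P := Fin (m (i+1)) → A) (DF i) (t.1 ∘ₗ DG i) t.2
      have hinv : ∀ x, (ui1 ∘ₗ DG (i+1)) x ∈ LinearMap.range (DF (i+1)) := by
        intro x
        have h0 : DF i (ui1 (DG (i+1) x)) = 0 := by
          rw [show DF i (ui1 (DG (i+1) x)) = (t.1 ∘ₗ DG i) (DG (i+1) x) from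
            LinearMap.congr_fun hui1 _]
          show t.1 (DG i (DG (i+1) x)) = 0
          rw [hDG0 i x, map_zero]
        obtain ⟨y, hy⟩ := (hDF i _).1 h0
        exact ⟨y, hy⟩
      exact ⟨⟨ui1, hinv⟩, hui1⟩)
  refine ⟨fun i => (u i).1, ?_, fun i => hrel i⟩
  show EF ∘ₗ (u 0).1 = EG
  rw [hu0']
  exact hu0

/-- nullhomotopy of a chain self-map `w` of a free resolution which is zero on `X`. -/
lemma homotopy_exists {m : ℕ → ℕ}
    (DG : ∀ i : ℕ, ((Fin (m (i+1)) → A) →ₗ[A] (Fin (m i) → A)))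
    (EG : (Fin (m 0) → A) →ₗ[A] X)
    (hEG : Function.Exact (DG 0) EG)
    (hDG : ∀ i, Function.Exact (DG (i+1)) (DG i))
    (w : ∀ i, ((Fin (m i) → A) →ₗ[A] (Fin (m i) → A)))
    (hw0 : EG ∘ₗ w 0 = 0) (hwc : ∀ i, DG i ∘ₗ w (i+1) = w i ∘ₗ DG i) :
    ∃ h : ∀ i, ((Fin (m i) → A) →ₗ[A] (Fin (m (i+1)) → A)),
      w 0 = DG 0 ∘ₗ h 0 ∧ ∀ i, w (i+1) = DG (i+1) ∘ₗ h (i+1) + h i ∘ₗ DG i := by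
  obtain ⟨h0, hh0⟩ := projLift (P := Fin (m 0) → A) (DG 0) (w 0)
    (fun x => by
      obtain ⟨y, hy⟩ := (hEG (w 0 x)).1 (LinearMap.congr_fun hw0 x)
      exact ⟨y, hy⟩)
  have hI0 : DG 0 ∘ₗ h0 ∘ₗ DG 0 = w 0 ∘ₗ DG 0 := by
    rw [← LinearMap.comp_assoc, hh0]
  obtain ⟨h, hh0', hrel⟩ := chain_rec
    (T := fun i => {hi : (Fin (m i) → A) →ₗ[A] (Fin (m (i+1)) → A) //
      DG i ∘ₗ hi ∘ₗ DG i = w i ∘ₗ DG i})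
    (Rel := fun i t t' => w (i+1) = DG (i+1) ∘ₗ t'.1 + t.1 ∘ₗ DG i)
    ⟨h0, hI0⟩
    (fun i t => by
      obtain ⟨hi1, hhi1⟩ := projLift (P := Fin (m (i+1)) → A) (DG (i+1))
        (w (i+1) - t.1 ∘ₗ DG i)
        (fun x => by
          have h0' : DG i ((w (i+1) - t.1 ∘ₗ DG i) x) = 0 := by
            show DG i (w (i+1) x - t.1 (DG i x)) = 0
            rw [map_sub,
              show DG i (w (i+1) x) = (w i ∘ₗ DG i) x from LinearMap.congr_fun (hwc i) x,
              show DG i (t.1 (DG i x)) = (DG i ∘ₗ t.1 ∘ₗ DG i) x from rfl,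
              t.2]
            exact sub_self _
          obtain ⟨y, hy⟩ := (hDG i _).1 h0'
          exact ⟨y, hy⟩)
      have hzero : DG i ∘ₗ DG (i+1) = 0 :=
        LinearMap.ext fun x => (hDG i).apply_apply_eq_zero x
      have hI : DG (i+1) ∘ₗ hi1 ∘ₗ DG (i+1) = w (i+1) ∘ₗ DG (i+1) := by
        rw [← LinearMap.comp_assoc, hhi1, LinearMap.sub_comp,
          LinearMap.comp_assoc _ _ t.1, hzero, LinearMap.comp_zero, sub_zero]
      refine ⟨⟨hi1, hI⟩, ?_⟩
      show w (i+1) = DG (i+1) ∘ₗ hi1 + t.1 ∘ₗ DG i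
      rw [hhi1, sub_add_cancel])
  refine ⟨fun i => (h i).1, ?_, fun i => hrel i⟩
  show w 0 = DG 0 ∘ₗ (h 0).1
  rw [hh0']
  exact hh0.symm

end Comparison

section Reverse
variable {C : Type} [AddCommGroup C] [Module A C]
variable {Y : Type} [AddCommGroup Y] [Module A Y]

lemma reverse_res {n m : ℕ → ℕ}
    (d : ∀ i : ℕ, ((Fin (n (i + 1)) → C) →ₗ[A] (Fin (n i) → C)))
    (ε : (Fin (n 0) → C) →ₗ[A] Y)
    (hε : Function.Surjective ε) (hde : Function.Exact (d 0) ε)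
    (hd : ∀ i, Function.Exact (d (i+1)) (d i))
    (DF : ∀ i : ℕ, ((Fin (n (i+1)) → A) →ₗ[A] (Fin (n i) → A)))
    (EF : (Fin (n 0) → A) →ₗ[A] (C →ₗ[A] Y))
    (hEFs : Function.Surjective EF) (hEF : Function.Exact (DF 0) EF)
    (hDF : ∀ i, Function.Exact (DF (i+1)) (DF i))
    (hT : ∀ i, Tmap C (DF i) = d i)
    (DG : ∀ i : ℕ, ((Fin (m (i+1)) → A) →ₗ[A] (Fin (m i) → A)))
    (EG : (Fin (m 0) → A) →ₗ[A] (C →ₗ[A] Y))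
    (hEGs : Function.Surjective EG) (hEG : Function.Exact (DG 0) EG)
    (hDG : ∀ i, Function.Exact (DG (i+1)) (DG i)) :
    ∃ (d' : ∀ i : ℕ, ((Fin (m (i + 1)) → C) →ₗ[A] (Fin (m i) → C)))
      (ε' : (Fin (m 0) → C) →ₗ[A] Y),
      Function.Surjective ε' ∧ Function.Exact (d' 0) ε' ∧
      ∀ i : ℕ, Function.Exact (d' (i+1)) (d' i) := by
  -- comparison maps
  obtain ⟨u, hu0, hus⟩ := chainMap_exists DF EF DG EG hEFs hEF hDF
    (fun x => hEG.apply_apply_eq_zero x) (fun i x => (hDG i).apply_apply_eq_zero x)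
  obtain ⟨v, hv0, hvs⟩ := chainMap_exists DG EG DF EF hEGs hEG hDG
    (fun x => hEF.apply_apply_eq_zero x) (fun i x => (hDF i).apply_apply_eq_zero x)
  -- nullhomotopy of v ∘ u - id on G
  have hw0 : EG ∘ₗ (v 0 ∘ₗ u 0 - LinearMap.id) = 0 := by
    rw [LinearMap.comp_sub, ← LinearMap.comp_assoc, hv0, hu0, LinearMap.comp_id, sub_self]
  have hwc : ∀ i, DG i ∘ₗ (v (i+1) ∘ₗ u (i+1) - LinearMap.id)
      = (v i ∘ₗ u i - LinearMap.id) ∘ₗ DG i := by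
    intro i
    rw [LinearMap.comp_sub, LinearMap.sub_comp, LinearMap.comp_id, LinearMap.id_comp,
      ← LinearMap.comp_assoc, hvs i, LinearMap.comp_assoc, hus i, ← LinearMap.comp_assoc]
  obtain ⟨h, hh0, hhs⟩ := homotopy_exists DG EG hEG hDG
    (fun i => v i ∘ₗ u i - LinearMap.id) hw0 hwc
  -- degree-0 homotopy of u ∘ v - id on F
  obtain ⟨h0', hh0'⟩ := projLift (P := Fin (n 0) → A) (DF 0) (u 0 ∘ₗ v 0 - LinearMap.id)
    (fun x => by
      have hz : EF ((u 0 ∘ₗ v 0 - LinearMap.id : _ →ₗ[A] _) x) = 0 := by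
        have : EF ∘ₗ (u 0 ∘ₗ v 0 - LinearMap.id) = 0 := by
          rw [LinearMap.comp_sub, ← LinearMap.comp_assoc, hu0, hv0, LinearMap.comp_id, sub_self]
        exact LinearMap.congr_fun this x
      obtain ⟨y, hy⟩ := (hEF _).1 hz
      exact ⟨y, hy⟩)
  -- the transported resolution
  set d' : ∀ i : ℕ, ((Fin (m (i + 1)) → C) →ₗ[A] (Fin (m i) → C)) :=
    fun i => Tmap C (DG i) with hd'
  set ε' : (Fin (m 0) → C) →ₗ[A] Y := ε ∘ₗ Tmap C (u 0) with hε'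
  -- transported identities
  have hsqU : ∀ i, d i ∘ₗ Tmap C (u (i+1)) = Tmap C (u i) ∘ₗ d' i := by
    intro i
    rw [← hT i, ← Tmap_comp, hus i, Tmap_comp]
  have hsqV : ∀ i, d' i ∘ₗ Tmap C (v (i+1)) = Tmap C (v i) ∘ₗ d i := by
    intro i
    rw [← hT i, ← Tmap_comp, hvs i, Tmap_comp]
  have hH0 : Tmap C (v 0) ∘ₗ Tmap C (u 0) - LinearMap.id = d' 0 ∘ₗ Tmap C (h 0) := by
    rw [← Tmap_comp, ← Tmap_id C (k := m 0), ← Tmap_sub, hh0, Tmap_comp]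
  have hHs : ∀ i, Tmap C (v (i+1)) ∘ₗ Tmap C (u (i+1)) - LinearMap.id
      = d' (i+1) ∘ₗ Tmap C (h (i+1)) + Tmap C (h i) ∘ₗ d' i := by
    intro i
    rw [← Tmap_comp, ← Tmap_id C (k := m (i+1)), ← Tmap_sub, hhs i, Tmap_add,
      Tmap_comp, Tmap_comp]
  have hH0' : Tmap C (u 0) ∘ₗ Tmap C (v 0) - LinearMap.id = d 0 ∘ₗ Tmap C (h0') := by
    rw [← Tmap_comp, ← Tmap_id C (k := n 0), ← Tmap_sub, ← hh0', Tmap_comp, hT 0]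
  have hepsd : ε ∘ₗ d 0 = 0 := LinearMap.ext fun x => hde.apply_apply_eq_zero x
  -- ε' ∘ Tv0 = ε
  have hres : ε' ∘ₗ Tmap C (v 0) = ε := by
    rw [hε', LinearMap.comp_assoc]
    have : Tmap C (u 0) ∘ₗ Tmap C (v 0) = LinearMap.id + d 0 ∘ₗ Tmap C (h0') := by
      rw [← hH0']; abel
    rw [this, LinearMap.comp_add, LinearMap.comp_id, ← LinearMap.comp_assoc, hepsd,
      LinearMap.zero_comp, add_zero]
  refine ⟨d', ε', ?_, ?_, ?_⟩
  · intro y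
    obtain ⟨z, hz⟩ := hε y
    exact ⟨Tmap C (v 0) z, by rw [← hz]; exact LinearMap.congr_fun hres z⟩
  · -- Exact (d' 0) ε'
    intro x
    constructor
    · intro hx
      have hx' : ε (Tmap C (u 0) x) = 0 := hx
      obtain ⟨y, hy⟩ := (hde _).1 hx'
      refine ⟨Tmap C (v 1) y - Tmap C (h 0) x, ?_⟩
      rw [map_sub]
      have e1 : d' 0 (Tmap C (v 1) y) = Tmap C (v 0) (d 0 y) := LinearMap.congr_fun (hsqV 0) y
      have e2 : Tmap C (v 0) (Tmap C (u 0) x) - x = d' 0 (Tmap C (h 0) x) :=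
        LinearMap.congr_fun hH0 x
      rw [e1, hy, ← e2]
      abel
    · rintro ⟨z, rfl⟩
      show ε' (d' 0 z) = 0
      have e1 : d 0 (Tmap C (u 1) z) = Tmap C (u 0) (d' 0 z) := LinearMap.congr_fun (hsqU 0) z
      show ε (Tmap C (u 0) (d' 0 z)) = 0
      rw [← e1]
      exact hde.apply_apply_eq_zero _
  · -- Exact (d' (i+1)) (d' i)
    intro i x
    constructor
    · intro hx
      have hx' : d i (Tmap C (u (i+1)) x) = 0 := by
        have e1 : d i (Tmap C (u (i+1)) x) = Tmap C (u i) (d' i x) :=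
          LinearMap.congr_fun (hsqU i) x
        rw [e1, hx, map_zero]
      obtain ⟨y, hy⟩ := (hd i _).1 hx'
      refine ⟨Tmap C (v (i+2)) y - Tmap C (h (i+1)) x, ?_⟩
      rw [map_sub]
      have e1 : d' (i+1) (Tmap C (v (i+2)) y) = Tmap C (v (i+1)) (d (i+1) y) :=
        LinearMap.congr_fun (hsqV (i+1)) y
      have e2 : Tmap C (v (i+1)) (Tmap C (u (i+1)) x) - x
          = d' (i+1) (Tmap C (h (i+1)) x) + Tmap C (h i) (d' i x) :=
        LinearMap.congr_fun (hHs i) x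
      rw [e1, hy, hx, map_zero, add_zero] at *
      -- x = Tv(i+1) (Tu(i+1) x) - d'(i+1)(Th(i+1) x)
      rw [← e2]
      abel
    · rintro ⟨z, rfl⟩
      show d' i (d' (i+1) z) = 0
      have hzero : DG i ∘ₗ DG (i+1) = 0 :=
        LinearMap.ext fun x => (hDG i).apply_apply_eq_zero x
      have hTz : Tmap C (0 : (Fin (m (i+2)) → A) →ₗ[A] (Fin (m i) → A)) = 0 := by
        have h2 := Tmap_sub C (0 : (Fin (m (i+2)) → A) →ₗ[A] (Fin (m i) → A)) 0
        simpa using h2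
      have hcomp : d' i ∘ₗ d' (i+1) = 0 := by
        show Tmap C (DG i) ∘ₗ Tmap C (DG (i+1)) = 0
        rw [← Tmap_comp, hzero, hTz]
      exact LinearMap.congr_fun hcomp z
end Reverse

end SemidualizingAux

open SemidualizingAux in
/-- Taking `C = A`, `HasResolutionByOfLength A A M s` says that `M` has a resolution of
length at most `s` by finitely generated free modules, and `cDim A A M` is the projective
dimension of `M` (over the noetherian local ring `A`, for finitely generated `M`, minimal
free resolutions compute the projective dimension). -/
theorem pd_hom_eq_cdim
    (A : Type) [CommRing A] [IsNoetherianRing A] [IsLocalRing A]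
    (C : Type) [AddCommGroup C] [Module A C] [Module.Finite A C]
    (hC : IsSemidualizing A C)
    (Y : Type) [AddCommGroup Y] [Module A Y] [Module.Finite A Y]
    (hY : HasFiniteCDim A C Y) :
    HasFiniteCDim A A (C →ₗ[A] Y) ∧ cDim A A (C →ₗ[A] Y) = cDim A C Y := by
  classical
  obtain ⟨P⟩ := HasProjectiveResolution.out (Z := ModuleCat.of A C)
  have hvC : ∀ k i, Hvan P (Fin k → C) i :=
    fun k i => hvan_pi P k i (hvan_C P hC.2 i)
  -- forward direction
  have forward : ∀ p : ℕ, HasResolutionByOfLength A C Y p →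
      HasResolutionByOfLength A A (C →ₗ[A] Y) p := by
    rintro p ⟨n, d, ε, htail, hε, hde, hd⟩
    obtain ⟨DF, EF, hEFs, hEF0, hDFi, _⟩ := exists_F P d ε hC.1 hvC hε hde hd htail
    exact ⟨n, DF, EF, htail, hEFs, hEF0, hDFi⟩
  -- reverse direction
  have reverse : ∀ p : ℕ, HasResolutionByOfLength A A (C →ₗ[A] Y) p →
      HasResolutionByOfLength A C Y p := by
    rintro p ⟨m, DG, EG, htailG, hEGs, hEG, hDG⟩
    obtain ⟨s, n, d, ε, htail, hε, hde, hd⟩ := hY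
    obtain ⟨DF, EF, hEFs, hEF0, hDFi, hT⟩ := exists_F P d ε hC.1 hvC hε hde hd htail
    obtain ⟨d', ε', hs1, hs2, hs3⟩ := reverse_res d ε hε hde hd DF EF hEFs hEF0 hDFi hT
      DG EG hEGs hEG hDG
    exact ⟨m, d', ε', htailG, hs1, hs2, hs3⟩
  have hsets : {s | HasResolutionByOfLength A A (C →ₗ[A] Y) s}
      = {s | HasResolutionByOfLength A C Y s} := by
    ext p
    exact ⟨reverse p, forward p⟩
  constructor
  · obtain ⟨s, hs⟩ := hY
    exact ⟨s, forward s hs⟩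
  · rw [cDim, cDim, hsets]
end

section
/- Let A be a commutative ring, x ∈ A, and K = (⋯ → K_s → K_{s−1} → ⋯ → K_1 → K_0 → 0) a complex of A-modules whose homology is concentrated in degree 0. If multiplication by x is injective on every chain module K_i and also injective on H_0(K), then the quotient complex K/xK has its homology concentrated in degree 0, where it is isomorphic to H_0(K)/xH_0(K). -/
/-!
Reduction modulo `x` is right exact, which identifies the degree-`0` homology. A cycle `ȳ` of
`K/xK` in degree `i + 1` has `d y = x z` with `z ∈ K_i`, and `ȳ` is a boundary as soon as `z` is
one, that is, as soon as `x` is regular on `K_i / im d`. For `i = 0` this is regularity on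
`H_0(K)`; for `i > 0`, exactness embeds `K_i / im d` into `K_{i-1}`, where `x` is regular.
-/

open Pointwise Function

theorem Submodule.smul_top_le_comap {R M M' : Type*} [CommRing R] [AddCommGroup M] [Module R M]
    [AddCommGroup M'] [Module R M'] (f : M →ₗ[R] M') (r : R) :
    r • ⊤ ≤ (r • ⊤ : Submodule R M').comap f := by
  rw [← Submodule.map_le_iff_le_comap, Submodule.map_pointwise_smul, Submodule.map_top]
  exact smul_mono_right r le_top

namespace QuotSMulTop

variable {R M M' M'' : Type*} [CommRing R] [AddCommGroup M] [Module R M]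
  [AddCommGroup M'] [Module R M'] [AddCommGroup M''] [Module R M''] {r : R}

theorem eq_map_of_comp_mkQ {f : M →ₗ[R] M'} {f' : QuotSMulTop r M →ₗ[R] QuotSMulTop r M'}
    (h : f' ∘ₗ (r • ⊤ : Submodule R M).mkQ = (r • ⊤ : Submodule R M').mkQ ∘ₗ f) :
    f' = map r f :=
  Submodule.linearMap_qext _ (h.trans (map_comp_mkQ r f).symm)

theorem map_exact_of_isSMulRegular_quotient_range {f : M →ₗ[R] M'} {g : M' →ₗ[R] M''}
    (hfg : Exact f g) (h : IsSMulRegular (M'' ⧸ LinearMap.range g) r) :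
    Exact (map r f) (map r g) := by
  change Exact (Submodule.mapQ _ _ f (Submodule.smul_top_le_comap f r))
    (Submodule.mapQ _ _ g (Submodule.smul_top_le_comap g r))
  rw [Exact.exact_mapQ_iff hfg, Submodule.map_pointwise_smul, Submodule.map_top, inf_comm]
  exact smul_top_inf_eq_smul_of_isSMulRegular_on_quot h

variable (r) in
noncomputable def quotientRangeMapEquiv (f : M →ₗ[R] M') :
    (QuotSMulTop r M' ⧸ LinearMap.range (map r f)) ≃ₗ[R]
      QuotSMulTop r (M' ⧸ LinearMap.range f) :=
  (map_exact r f.exact_map_mkQ_range (Submodule.mkQ_surjective _)).linearEquivOfSurjective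
    (map_surjective r (Submodule.mkQ_surjective _))

end QuotSMulTop

theorem quotient_complex_homology_concentrated_general
    (A : Type) [CommRing A] (x : A)
    (K : ℕ → Type) [∀ i, AddCommGroup (K i)] [∀ i, Module A (K i)]
    (d : ∀ i : ℕ, K (i + 1) →ₗ[A] K i)
    -- the homology of `K` is concentrated in degree 0:
    (hexact : ∀ i : ℕ, Function.Exact (d (i + 1)) (d i))
    -- multiplication by `x` is injective on every chain module and on `H_0(K)`:
    (hinj : ∀ i : ℕ, Function.Injective (fun m : K i => x • m))
    (hinj0 : Function.Injective
      (fun m : K 0 ⧸ LinearMap.range (d 0) => x • m))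
    -- `d'` is the complex `K/xK` of quotients with the induced differentials:
    (d' : ∀ i : ℕ, (K (i + 1) ⧸ (x • (⊤ : Submodule A (K (i + 1))))) →ₗ[A]
      (K i ⧸ (x • (⊤ : Submodule A (K i)))))
    (hd' : ∀ i : ℕ, d' i ∘ₗ (x • (⊤ : Submodule A (K (i + 1)))).mkQ =
      (x • (⊤ : Submodule A (K i))).mkQ ∘ₗ d i) :
    -- `K/xK` has homology concentrated in degree 0, where it is `H_0(K)/x·H_0(K)`:
    (∀ i : ℕ, Function.Exact (d' (i + 1)) (d' i)) ∧
    Nonempty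
      (((K 0 ⧸ (x • (⊤ : Submodule A (K 0)))) ⧸ LinearMap.range (d' 0)) ≃ₗ[A]
        ((K 0 ⧸ LinearMap.range (d 0)) ⧸
          (x • (⊤ : Submodule A (K 0 ⧸ LinearMap.range (d 0)))))) := by
  obtain rfl : d' = fun i => QuotSMulTop.map x (d i) :=
    funext fun i => QuotSMulTop.eq_map_of_comp_mkQ (hd' i)
  refine ⟨fun i => ?_, ⟨QuotSMulTop.quotientRangeMapEquiv x (d 0)⟩⟩
  cases i with
  | zero => exact QuotSMulTop.map_exact_of_isSMulRegular_quotient_range (hexact 0) hinj0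
  | succ j =>
    exact QuotSMulTop.map_first_exact_on_four_term_exact_of_isSMulRegular_last
      (hexact (j + 1)) (hexact j) (hinj j)

/-- Let `K = (⋯ → K_1 → K_0 → 0)` be a complex of `A`-modules whose homology is
concentrated in degree `0`.  If multiplication by `x` is injective on every `K_i` and on
`H_0(K) = K_0 / im(d_0)`, then the quotient complex `K/xK` has homology concentrated in
degree `0`, where it equals `H_0(K)/x·H_0(K)`. -/
theorem quotient_complex_homology_concentrated
    (A : Type) [CommRing A] (x : A)
    (K : ℕ → Type) [∀ i, AddCommGroup (K i)] [∀ i, Module A (K i)]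
    (d : ∀ i : ℕ, K (i + 1) →ₗ[A] K i)
    (hcx : ∀ i : ℕ, d i ∘ₗ d (i + 1) = 0)
    -- the homology of `K` is concentrated in degree 0:
    (hexact : ∀ i : ℕ, Function.Exact (d (i + 1)) (d i))
    -- multiplication by `x` is injective on every chain module and on `H_0(K)`:
    (hinj : ∀ i : ℕ, Function.Injective (fun m : K i => x • m))
    (hinj0 : Function.Injective
      (fun m : K 0 ⧸ LinearMap.range (d 0) => x • m))
    -- `d'` is the complex `K/xK` of quotients with the induced differentials:
    (d' : ∀ i : ℕ, (K (i + 1) ⧸ (x • (⊤ : Submodule A (K (i + 1))))) →ₗ[A]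
      (K i ⧸ (x • (⊤ : Submodule A (K i)))))
    (hd' : ∀ i : ℕ, d' i ∘ₗ (x • (⊤ : Submodule A (K (i + 1)))).mkQ =
      (x • (⊤ : Submodule A (K i))).mkQ ∘ₗ d i) :
    -- `K/xK` has homology concentrated in degree 0, where it is `H_0(K)/x·H_0(K)`:
    (∀ i : ℕ, Function.Exact (d' (i + 1)) (d' i)) ∧
    Nonempty
      (((K 0 ⧸ (x • (⊤ : Submodule A (K 0)))) ⧸ LinearMap.range (d' 0)) ≃ₗ[A]
        ((K 0 ⧸ LinearMap.range (d 0)) ⧸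
          (x • (⊤ : Submodule A (K 0 ⧸ LinearMap.range (d 0)))))) :=
  quotient_complex_homology_concentrated_general A x K d hexact hinj hinj0 d' hd'
end

section
/- Let A be a commutative noetherian local ring, C a semidualizing A-module, Y a finitely generated A-module of finite C-dimension, and x ∈ A a nonzerodivisor both in A and on Y. Then the A/(x)-module Y/xY has finite C/xC-dimension over A/(x). -/
open CategoryTheory Opposite

open Submodule Function Pointwise

section Helpers

variable {A : Type} [CommRing A]

lemma mem_span_smul_top_iff (x : A) {M : Type} [AddCommGroup M] [Module A M] (m : M) :
    m ∈ (Ideal.span {x} • (⊤ : Submodule A M)) ↔ ∃ v, x • v = m := by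
  rw [Submodule.ideal_span_singleton_smul]
  constructor
  · intro h
    have : m ∈ x • ((⊤ : Submodule A M) : Set M) := by
      rw [← Submodule.coe_pointwise_smul]; exact h
    obtain ⟨v, -, hv⟩ := Set.mem_smul_set.mp this
    exact ⟨v, hv⟩
  · rintro ⟨v, rfl⟩
    exact Submodule.smul_mem_pointwise_smul v x ⊤ trivial

lemma quot_mk_smul (I : Ideal A) {M : Type} [AddCommGroup M] [Module A M] (a : A)
    (m : M ⧸ (I • (⊤ : Submodule A M))) :
    (Ideal.Quotient.mk I a) • m = a • m := by
  rw [← Ideal.Quotient.algebraMap_eq, algebraMap_smul]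

/-- Promote an `A`-linear map between `A⧸I`-modules to an `A⧸I`-linear map. -/
def promote (I : Ideal A) {M N : Type} [AddCommGroup M] [Module A M] [AddCommGroup N]
    [Module A N] [Module (A ⧸ I) M] [Module (A ⧸ I) N] [IsScalarTower A (A ⧸ I) M]
    [IsScalarTower A (A ⧸ I) N] (f : M →ₗ[A] N) : M →ₗ[A ⧸ I] N where
  toFun := f
  map_add' := f.map_add
  map_smul' := by
    intro b m
    obtain ⟨a, rfl⟩ := Ideal.Quotient.mk_surjective b
    simp only [RingHom.id_apply, ← Ideal.Quotient.algebraMap_eq, algebraMap_smul]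
    exact f.map_smul a m

@[simp] lemma promote_apply (I : Ideal A) {M N : Type} [AddCommGroup M] [Module A M]
    [AddCommGroup N] [Module A N] [Module (A ⧸ I) M] [Module (A ⧸ I) N]
    [IsScalarTower A (A ⧸ I) M] [IsScalarTower A (A ⧸ I) N] (f : M →ₗ[A] N) (m : M) :
    promote I f m = f m := rfl

variable (x : A) {M N : Type} [AddCommGroup M] [Module A M] [AddCommGroup N] [Module A N]

/-- The induced `A⧸(x)`-linear map on quotients mod `x`. -/
def barMap (f : M →ₗ[A] N) :
    (M ⧸ (Ideal.span {x} • (⊤ : Submodule A M))) →ₗ[A ⧸ Ideal.span {x}]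
      (N ⧸ (Ideal.span {x} • (⊤ : Submodule A N))) :=
  promote _ (Submodule.mapQ _ _ f (by
    refine Submodule.map_le_iff_le_comap.mp ?_
    rw [Submodule.map_smul'']
    exact smul_mono_right _ le_top))

@[simp] lemma barMap_mk (f : M →ₗ[A] N) (m : M) :
    barMap x f (Submodule.Quotient.mk m) = Submodule.Quotient.mk (f m) := rfl

lemma barMap_surjective (f : M →ₗ[A] N) (hf : Function.Surjective f) :
    Function.Surjective (barMap x f) := by
  intro ybar
  obtain ⟨y, rfl⟩ := Submodule.Quotient.mk_surjective _ ybar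
  obtain ⟨m, rfl⟩ := hf y
  exact ⟨Submodule.Quotient.mk m, rfl⟩

lemma exact_barMap {P : Type} [AddCommGroup P] [Module A P]
    (f : P →ₗ[A] M) (g : M →ₗ[A] N) (hfg : Function.Exact f g)
    (hsat : ∀ n : N, (∃ m, g m = x • n) → ∃ m, g m = n) :
    Function.Exact (barMap x f) (barMap x g) := by
  intro ybar
  constructor
  · intro h0
    obtain ⟨m1, rfl⟩ := Submodule.Quotient.mk_surjective _ ybar
    rw [barMap_mk, Submodule.Quotient.mk_eq_zero, mem_span_smul_top_iff] at h0
    obtain ⟨n0, hn0⟩ := h0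
    obtain ⟨m1', hm1'⟩ := hsat n0 ⟨m1, hn0.symm⟩
    have : g (m1 - x • m1') = 0 := by
      rw [map_sub, map_smul, hm1', ← hn0, sub_self]
    obtain ⟨m2, hm2⟩ := (hfg _).mp this
    refine ⟨Submodule.Quotient.mk m2, ?_⟩
    rw [barMap_mk, hm2, Submodule.Quotient.mk_sub]
    have : (Submodule.Quotient.mk (x • m1') :
        M ⧸ (Ideal.span {x} • (⊤ : Submodule A M))) = 0 := by
      rw [Submodule.Quotient.mk_eq_zero, mem_span_smul_top_iff]; exact ⟨m1', rfl⟩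
    rw [this, sub_zero]
  · rintro ⟨zbar, rfl⟩
    obtain ⟨z, rfl⟩ := Submodule.Quotient.mk_surjective _ zbar
    rw [barMap_mk, barMap_mk, hfg.apply_apply_eq_zero z]
    exact (Submodule.Quotient.mk_eq_zero _).mpr (Submodule.zero_mem _)

lemma exact_congr {B M1 M2 M3 N1 N2 N3 : Type} [CommRing B]
    [AddCommGroup M1] [Module B M1] [AddCommGroup M2] [Module B M2]
    [AddCommGroup M3] [Module B M3] [AddCommGroup N1] [Module B N1]
    [AddCommGroup N2] [Module B N2] [AddCommGroup N3] [Module B N3]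
    (e1 : M1 ≃ₗ[B] N1) (e2 : M2 ≃ₗ[B] N2) (e3 : M3 ≃ₗ[B] N3)
    (f : M1 →ₗ[B] M2) (g : M2 →ₗ[B] M3) (f' : N1 →ₗ[B] N2) (g' : N2 →ₗ[B] N3)
    (hf' : ∀ z, f' z = e2 (f (e1.symm z))) (hg' : ∀ z, g' z = e3 (g (e2.symm z)))
    (h : Function.Exact f g) : Function.Exact f' g' := by
  intro y
  rw [hg']
  constructor
  · intro h0
    have h1 : g (e2.symm y) = 0 := by
      have := (LinearEquiv.map_eq_zero_iff e3).mp h0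
      exact this
    obtain ⟨z, hz⟩ := (h _).mp h1
    refine ⟨e1 z, ?_⟩
    rw [hf', e1.symm_apply_apply, hz, e2.apply_symm_apply]
  · rintro ⟨z, rfl⟩
    rw [hf', e2.symm_apply_apply, h.apply_apply_eq_zero, map_zero]

end Helpers

section PiEquiv

variable {A : Type} [CommRing A] (x : A) {C : Type} [AddCommGroup C] [Module A C]

/-- `(C^k)/x(C^k) ≃ (C/xC)^k` as `A⧸(x)`-modules. -/
noncomputable def piEquiv (k : ℕ) :
    ((Fin k → C) ⧸ (Ideal.span {x} • (⊤ : Submodule A (Fin k → C))))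
      ≃ₗ[A ⧸ Ideal.span {x}]
    (Fin k → C ⧸ (Ideal.span {x} • (⊤ : Submodule A C))) := by
  let Φ : (Fin k → C) →ₗ[A] (Fin k → C ⧸ (Ideal.span {x} • (⊤ : Submodule A C))) :=
    LinearMap.pi fun j => (Submodule.mkQ _).comp (LinearMap.proj j)
  have hker : (Ideal.span {x} • (⊤ : Submodule A (Fin k → C))) ≤ LinearMap.ker Φ := by
    intro v hv
    rw [mem_span_smul_top_iff] at hv
    obtain ⟨w, rfl⟩ := hv
    rw [LinearMap.mem_ker]
    funext j
    show (Submodule.Quotient.mk ((x • w) j) : C ⧸ _) = 0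
    rw [Submodule.Quotient.mk_eq_zero, mem_span_smul_top_iff]
    exact ⟨w j, rfl⟩
  let Φb := promote (Ideal.span {x}) (Submodule.liftQ _ Φ hker)
  have hmk : ∀ v : Fin k → C, ∀ j, Φb (Submodule.Quotient.mk v) j
      = Submodule.Quotient.mk (v j) := fun v j => rfl
  refine LinearEquiv.ofBijective Φb ⟨?_, ?_⟩
  · rw [← LinearMap.ker_eq_bot, Submodule.eq_bot_iff]
    intro z hz
    obtain ⟨v, rfl⟩ := Submodule.Quotient.mk_surjective _ z
    rw [LinearMap.mem_ker] at hz
    have hv : ∀ j, ∃ w, x • w = v j := by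
      intro j
      have : Φb (Submodule.Quotient.mk v) j = 0 := by rw [hz]; rfl
      rw [hmk, Submodule.Quotient.mk_eq_zero, mem_span_smul_top_iff] at this
      exact this
    choose w hw using hv
    rw [Submodule.Quotient.mk_eq_zero, mem_span_smul_top_iff]
    exact ⟨w, funext fun j => hw j⟩
  · intro g
    choose v hv using fun j => Submodule.Quotient.mk_surjective _ (g j)
    exact ⟨Submodule.Quotient.mk v, funext fun j => (hmk v j).trans (hv j)⟩

lemma piEquiv_symm_mk (k : ℕ) (v : Fin k → C) :
    (piEquiv (C := C) x k).symm (fun j => Submodule.Quotient.mk (v j))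
      = Submodule.Quotient.mk v := by
  apply (piEquiv (C := C) x k).injective
  rw [LinearEquiv.apply_symm_apply]
  rfl

end PiEquiv

section Dual

/-- A faithful finitely generated module over a noetherian domain admits a
nonzero linear functional. -/
lemma exists_functional_ne_zero (R : Type) [CommRing R] [IsDomain R]
    (M : Type) [AddCommGroup M] [Module R M] [Module.Finite R M]
    (hfaith : ∀ r : R, (∀ m : M, r • m = 0) → r = 0) :
    ∃ (ψ : M →ₗ[R] R) (m : M), ψ m ≠ 0 := by
  classical
  -- a torsion-free element
  have hm : ∃ m : M, ∀ r : R, r • m = 0 → r = 0 := by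
    by_contra h
    push_neg at h
    choose rr hrr1 hrr2 using h
    obtain ⟨T, hT⟩ := Module.Finite.fg_top (R := R) (M := M)
    set r : R := ∏ t ∈ T, rr t with hr
    have hrne : r ≠ 0 := Finset.prod_ne_zero_iff.mpr fun t _ => hrr2 t
    have hkill : ∀ m : M, r • m = 0 := by
      intro m
      have hmem : m ∈ (⊤ : Submodule R M) := trivial
      rw [← hT] at hmem
      induction hmem using Submodule.span_induction with
      | mem t ht =>
        rw [hr, ← Finset.prod_erase_mul T _ ht, mul_smul, hrr1 t, smul_zero]
      | zero => rw [smul_zero]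
      | add y z _ _ hy hz => rw [smul_add, hy, hz, add_zero]
      | smul a y _ hy => rw [smul_comm, hy, smul_zero]
    exact hrne (hfaith r hkill)
  obtain ⟨m, hm⟩ := hm
  set S := nonZeroDivisors R
  set K := Localization S
  set V := LocalizedModule S M
  letI : Field K := IsFractionRing.toField R
  have hv : LocalizedModule.mkLinearMap S M m ≠ 0 := by
    intro h0
    obtain ⟨s, hs⟩ := (IsLocalizedModule.eq_zero_iff S (LocalizedModule.mkLinearMap S M)).mp h0
    exact nonZeroDivisors.ne_zero s.2 (hm s hs)
  obtain ⟨f, hf⟩ : ∃ f : Module.Dual K V, f (LocalizedModule.mkLinearMap S M m) ≠ 0 := by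
    by_contra h
    push_neg at h
    exact hv ((Module.forall_dual_apply_eq_zero_iff K _).mp h)
  let φ : M →ₗ[R] K := (f.restrictScalars R).comp (LocalizedModule.mkLinearMap S M)
  have hφm : φ m ≠ 0 := hf
  obtain ⟨T, hT⟩ := Module.Finite.fg_top (R := R) (M := M)
  obtain ⟨b, hb⟩ := IsLocalization.exist_integer_multiples S T (fun t : M => φ t)
  let φ' : M →ₗ[R] K := (b : R) • φ
  have hrange : ∀ m' : M, φ' m' ∈ LinearMap.range (Algebra.linearMap R K) := by
    intro m'
    have hmem : m' ∈ (⊤ : Submodule R M) := trivial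
    rw [← hT] at hmem
    have : m' ∈ Submodule.comap φ' (LinearMap.range (Algebra.linearMap R K)) := by
      refine Submodule.span_le.mpr ?_ hmem
      intro t ht
      obtain ⟨r, hr⟩ := hb t ht
      refine Submodule.mem_comap.mpr ⟨r, ?_⟩
      rw [Algebra.linearMap_apply, hr]
      exact (LinearMap.smul_apply (b : R) φ t).symm
    exact this
  have halg : Function.Injective (Algebra.linearMap R K) := IsFractionRing.injective R K
  let e := LinearEquiv.ofInjective (Algebra.linearMap R K) halg
  refine ⟨e.symm.toLinearMap.comp (LinearMap.codRestrict _ φ' hrange), m, ?_⟩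
  intro h0
  have h1 : (LinearMap.codRestrict _ φ' hrange) m = 0 := by
    have h0' : e.symm ((LinearMap.codRestrict _ φ' hrange) m) = 0 := h0
    exact (LinearEquiv.map_eq_zero_iff e.symm).mp h0'
  have h2 : φ' m = 0 := congrArg Subtype.val h1
  have hbne : algebraMap R K (b : R) ≠ 0 := by
    intro hb0
    exact nonZeroDivisors.ne_zero b.2 (halg (by simpa using hb0))
  rw [show φ' m = (b : R) • φ m from rfl, Algebra.smul_def] at h2
  exact hφm ((mul_eq_zero.mp h2).resolve_left hbne)

end Dual

section Regular

variable (A : Type) [CommRing A] [IsNoetherianRing A]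
variable (C : Type) [AddCommGroup C] [Module A C] [Module.Finite A C]

/-- If `A → End_A(C)` is bijective, then any nonzerodivisor of `A` is a
nonzerodivisor on `C`. -/
lemma smul_injective_of_bijective_algebraMap
    (hbij : Function.Bijective (algebraMap A (Module.End A C)))
    (x : A) (hxA : Function.Injective (fun a : A => x * a)) :
    Function.Injective (fun c : C => x • c) := by
  have hann : ∀ a : A, (∀ c : C, a • c = 0) → a = 0 := by
    intro a ha
    apply hbij.1
    rw [map_zero]
    exact LinearMap.ext fun c => by rw [Module.algebraMap_end_apply, ha c]; rfl
  intro c1 c2 h12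
  by_contra hne
  have hc0ne : c1 - c2 ≠ 0 := sub_ne_zero.mpr hne
  have hxc0 : x • (c1 - c2) = 0 := by
    have : x • c1 = x • c2 := h12
    rw [smul_sub, this, sub_self]
  obtain ⟨p, hp, hle⟩ := exists_le_isAssociatedPrime_of_isNoetherianRing A (c1 - c2) hc0ne
  obtain ⟨hprime, c', hc'⟩ := (isAssociatedPrime_iff.mp hp)
  haveI : p.IsPrime := hprime
  have hxp : x ∈ p := hle (Submodule.mem_colon_singleton.mpr ((Submodule.mem_bot A).mpr hxc0))
  have hxc' : x • c' = 0 := (Submodule.mem_bot A).mp (Submodule.mem_colon_singleton.mp (hc' ▸ hxp))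
  set R := A ⧸ p with hR
  set Cp := C ⧸ (p • (⊤ : Submodule A C)) with hCp
  haveI : Module.Finite R Cp := Module.Finite.of_restrictScalars_finite A R Cp
  have hfaith : ∀ r : R, (∀ mp : Cp, r • mp = 0) → r = 0 := by
    intro r hr
    obtain ⟨a, rfl⟩ := Ideal.Quotient.mk_surjective r
    have hrange : LinearMap.range (algebraMap A (Module.End A C) a)
        ≤ p • (⊤ : Submodule A C) := by
      rintro _ ⟨c, rfl⟩
      rw [Module.algebraMap_end_apply]
      have h1 := hr (Submodule.Quotient.mk c)
      rw [quot_mk_smul, ← Submodule.Quotient.mk_smul] at h1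
      exact (Submodule.Quotient.mk_eq_zero _).mp h1
    obtain ⟨q, hmonic, -, hcoeff, haeval⟩ :=
      LinearMap.exists_monic_and_coeff_mem_pow_and_aeval_eq_zero_of_range_le_smul A
        (algebraMap A (Module.End A C) a) p hrange
    have hq0 : Polynomial.aeval a q = 0 := by
      apply hann
      intro c
      have h2 : algebraMap A (Module.End A C) (Polynomial.aeval a q) = 0 := by
        rw [← Polynomial.aeval_algebraMap_apply, haeval]
      have h3 := congrArg (fun g : Module.End A C => g c) h2
      simpa [Module.algebraMap_end_apply] using h3
    set n := q.natDegree with hn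
    have hmap : q.map (Ideal.Quotient.mk p) = Polynomial.X ^ n := by
      ext k
      rw [Polynomial.coeff_map, Polynomial.coeff_X_pow]
      rcases lt_trichotomy k n with hk | hk | hk
      · rw [if_neg hk.ne]
        exact Ideal.Quotient.eq_zero_iff_mem.mpr
          (Ideal.pow_le_self (by omega) (hcoeff k))
      · rw [if_pos hk]
        subst hk
        rw [hmonic.coeff_natDegree, map_one]
      · rw [if_neg hk.ne', Polynomial.coeff_eq_zero_of_natDegree_lt hk, map_zero]
    have h4 : (Ideal.Quotient.mk p a) ^ n = 0 := by
      have h5 : Polynomial.aeval (Ideal.Quotient.mk p a) q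
          = Ideal.Quotient.mk p (Polynomial.aeval a q) := by
        exact (Polynomial.aeval_algHom_apply (Ideal.Quotient.mkₐ A p) a q)
      have h6 : Polynomial.aeval (Ideal.Quotient.mk p a) q = 0 := by
        rw [h5, hq0, map_zero]
      rw [Polynomial.aeval_def, Polynomial.eval₂_eq_eval_map,
        Ideal.Quotient.algebraMap_eq, hmap] at h6
      simpa using h6
    rcases Nat.eq_zero_or_pos n with hn0 | hn0
    · exfalso
      rw [hn0, pow_zero] at h4
      exact one_ne_zero h4
    · exact (pow_eq_zero_iff hn0.ne').mp h4
  obtain ⟨ψ, mp, hψ⟩ := exists_functional_ne_zero R Cp hfaith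
  have hker : p ≤ LinearMap.ker (LinearMap.toSpanSingleton A C c') := by
    intro a ha
    rw [LinearMap.mem_ker, LinearMap.toSpanSingleton_apply]
    exact (Submodule.mem_bot A).mp (Submodule.mem_colon_singleton.mp (hc' ▸ ha))
  let γ : R →ₗ[A] C := Submodule.liftQ p (LinearMap.toSpanSingleton A C c') hker
  have hγmk : ∀ a : A, γ (Ideal.Quotient.mk p a) = a • c' := fun a => rfl
  have hγinj : ∀ z : R, γ z = 0 → z = 0 := by
    intro z hz
    obtain ⟨a, rfl⟩ := Ideal.Quotient.mk_surjective z
    rw [hγmk] at hz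
    exact Ideal.Quotient.eq_zero_iff_mem.mpr
      (hc' ▸ Submodule.mem_colon_singleton.mpr ((Submodule.mem_bot A).mpr hz))
  let φC : C →ₗ[A] C := γ.comp ((ψ.restrictScalars A).comp (Submodule.mkQ _))
  obtain ⟨a₀, ha₀⟩ := hbij.2 φC
  obtain ⟨c₀, hc₀mk⟩ := Submodule.Quotient.mk_surjective _ mp
  have hφCc₀ : φC c₀ = γ (ψ mp) := by
    show γ (ψ (Submodule.Quotient.mk c₀)) = γ (ψ mp)
    rw [hc₀mk]
  have hφCne : φC c₀ ≠ 0 := by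
    intro h0
    rw [hφCc₀] at h0
    exact hψ (hγinj _ h0)
  have ha₀ne : a₀ ≠ 0 := by
    rintro rfl
    rw [map_zero] at ha₀
    apply hφCne
    rw [← ha₀]
    rfl
  have hxφ : ∀ c : C, x • φC c = 0 := by
    intro c
    show x • γ (ψ (Submodule.Quotient.mk c)) = 0
    obtain ⟨a₁, ha₁⟩ := Ideal.Quotient.mk_surjective (ψ (Submodule.Quotient.mk c))
    rw [← ha₁, hγmk, smul_comm, hxc', smul_zero]
  have hxa₀ : x * a₀ = 0 := by
    apply hann
    intro c
    have h7 := hxφ c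
    rw [← ha₀, Module.algebraMap_end_apply] at h7
    rw [mul_smul]
    exact h7
  exact ha₀ne (hxA (show x * a₀ = x * 0 by rw [hxa₀, mul_zero]))

end Regular

section Main

theorem quotient_finite_cdim'
    (A : Type) [CommRing A] [IsNoetherianRing A] [IsLocalRing A]
    (C : Type) [AddCommGroup C] [Module A C] [Module.Finite A C]
    (hC1 : Function.Bijective (algebraMap A (Module.End A C)))
    (Y : Type) [AddCommGroup Y] [Module A Y] [Module.Finite A Y]
    (hY : ∃ (s : ℕ) (n : ℕ → ℕ)
      (d : ∀ i : ℕ, ((Fin (n (i + 1)) → C) →ₗ[A] (Fin (n i) → C)))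
      (ε : (Fin (n 0) → C) →ₗ[A] Y),
      (∀ i, s < i → n i = 0) ∧
      Function.Surjective ε ∧ Function.Exact (d 0) ε ∧
      ∀ i : ℕ, Function.Exact (d (i + 1)) (d i))
    (x : A) (hxA : Function.Injective (fun a : A => x * a))
    (hxY : Function.Injective (fun m : Y => x • m)) :
    ∃ (s : ℕ) (n : ℕ → ℕ)
      (d : ∀ i : ℕ, ((Fin (n (i + 1)) → C ⧸ (Ideal.span {x} • (⊤ : Submodule A C)))
        →ₗ[A ⧸ Ideal.span {x}] (Fin (n i) → C ⧸ (Ideal.span {x} • (⊤ : Submodule A C)))))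
      (ε : (Fin (n 0) → C ⧸ (Ideal.span {x} • (⊤ : Submodule A C)))
        →ₗ[A ⧸ Ideal.span {x}] (Y ⧸ (Ideal.span {x} • (⊤ : Submodule A Y)))),
      (∀ i, s < i → n i = 0) ∧
      Function.Surjective ε ∧ Function.Exact (d 0) ε ∧
      ∀ i : ℕ, Function.Exact (d (i + 1)) (d i) := by
  obtain ⟨s, n, d, ε, hlen, hsurj, hd0, hd⟩ := hY
  have hxC : Function.Injective (fun c : C => x • c) :=
    smul_injective_of_bijective_algebraMap A C hC1 x hxA
  have hxFinC : ∀ k, Function.Injective (fun v : Fin k → C => x • v) := by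
    intro k v w h
    funext j
    exact hxC (congrFun h j)
  refine ⟨s, n,
    fun i => ((piEquiv x (n i)).toLinearMap.comp
      ((barMap x (d i)).comp (piEquiv x (n (i + 1))).symm.toLinearMap)),
    (barMap x ε).comp (piEquiv x (n 0)).symm.toLinearMap,
    hlen, ?_, ?_, ?_⟩
  · rw [LinearMap.coe_comp]
    exact (barMap_surjective x ε hsurj).comp
      (LinearEquiv.surjective (piEquiv x (n 0)).symm)
  · refine exact_congr (piEquiv x (n 1)) (piEquiv x (n 0))
      (LinearEquiv.refl (A ⧸ Ideal.span {x}) _)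
      (barMap x (d 0)) (barMap x ε) _ _ (fun z => rfl) (fun z => rfl)
      (exact_barMap x (d 0) ε hd0 (fun y _ => hsurj y))
  · intro i
    have hsat : ∀ v : Fin (n i) → C, (∃ w, d i w = x • v) → ∃ w, d i w = v := by
      cases i with
      | zero =>
        rintro v ⟨w, hw⟩
        have h1 : ε (x • v) = 0 := by rw [← hw]; exact hd0.apply_apply_eq_zero w
        have h2 : ε v = 0 := by
          apply hxY
          show x • ε v = x • (0 : Y)
          rw [smul_zero, ← map_smul, h1]
        exact (hd0 v).mp h2
      | succ j =>
        rintro v ⟨w, hw⟩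
        have h1 : d j (x • v) = 0 := by rw [← hw]; exact (hd j).apply_apply_eq_zero w
        have h2 : d j v = 0 := by
          apply hxFinC (n j)
          show x • d j v = x • (0 : Fin (n j) → C)
          rw [smul_zero, ← map_smul, h1]
        exact ((hd j) v).mp h2
    exact exact_congr (piEquiv x (n (i + 2))) (piEquiv x (n (i + 1))) (piEquiv x (n i))
      (barMap x (d (i + 1))) (barMap x (d i)) _ _ (fun z => rfl) (fun z => rfl)
      (exact_barMap x (d (i + 1)) (d i) (hd i) hsat)

end Main

/-- If `C` is a semidualizing module over the commutative noetherian local ring `A`, `Y` is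
a finitely generated module of finite `C`-dimension, and `x` is a nonzerodivisor both in
`A` and on `Y`, then the `A/(x)`-module `Y/xY` has finite `C/xC`-dimension. -/
theorem quotient_finite_cdim
    (A : Type) [CommRing A] [IsNoetherianRing A] [IsLocalRing A]
    (C : Type) [AddCommGroup C] [Module A C] [Module.Finite A C]
    (hC : IsSemidualizing A C)
    (Y : Type) [AddCommGroup Y] [Module A Y] [Module.Finite A Y]
    (hY : HasFiniteCDim A C Y)
    (x : A) (hxA : Function.Injective (fun a : A => x * a))
    (hxY : Function.Injective (fun m : Y => x • m)) :
    HasFiniteCDim (A ⧸ Ideal.span {x})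
      (C ⧸ (Ideal.span {x} • (⊤ : Submodule A C)))
      (Y ⧸ (Ideal.span {x} • (⊤ : Submodule A Y))) := by
  exact quotient_finite_cdim' A C hC.1 Y hY x hxA hxY
end

section
/- Let A be a commutative noetherian local ring, C a semidualizing A-module, Y a finitely generated A-module of finite C-dimension, and x ∈ A a nonzerodivisor on Y. Then there is an isomorphism of A/(x)-modules Hom_{A/(x)}(C/xC, Y/xY) ≅ Hom_A(C,Y)/x·Hom_A(C,Y). -/
open CategoryTheory Opposite

section Aux

variable {A : Type} [CommRing A] {C : Type} [AddCommGroup C] [Module A C]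

/-- Cocycles at degree `i+1` of `Hom(P, M)` are coboundaries. -/
def ExAt (P : ProjectiveResolution (ModuleCat.of A C))
    (M : Type) [AddCommGroup M] [Module A M] (i : ℕ) : Prop :=
  ∀ f : P.complex.X (i+1) →ₗ[A] M,
    f ∘ₗ (P.complex.d (i+2) (i+1)).hom = 0 →
    ∃ g : P.complex.X i →ₗ[A] M,
      f = g ∘ₗ (P.complex.d (i+1) i).hom

lemma exAt_of_subsingleton_ext (P : ProjectiveResolution (ModuleCat.of A C))
    (M : Type) [AddCommGroup M] [Module A M] (i : ℕ)
    (h : Subsingleton (((Ext A (ModuleCat A) (i+1)).obj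
      (op (ModuleCat.of A C))).obj (ModuleCat.of A M))) :
    ExAt P M i := by
  intro f hf
  have e := P.isoExt (R := A) (i+1) (ModuleCat.of A M)
  set K := P.complex.linearYonedaObj A (ModuleCat.of A M) with hK
  have hsub : Subsingleton (K.homology (i+1)) := by
    have e2 : (K.homology (i+1) : Type _) ≃ _ := e.symm.toLinearEquiv.toEquiv
    exact e2.subsingleton
  have hz : Limits.IsZero (K.homology (i+1)) := ModuleCat.isZero_of_subsingleton _
  have hex : K.ExactAt (i+1) :=
    (HomologicalComplex.exactAt_iff_isZero_homology _ _).2 hz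
  rw [HomologicalComplex.exactAt_iff' K i (i+1) (i+2)
    (by simp) (by simp)] at hex
  rw [ShortComplex.moduleCat_exact_iff] at hex
  obtain ⟨g, hg⟩ := hex (ModuleCat.ofHom f) (by
    show (K.d (i+1) (i+2)) (ModuleCat.ofHom f) = 0
    rw [ChainComplex.linearYonedaObj_d]
    refine ModuleCat.hom_ext (LinearMap.ext fun p => ?_)
    exact LinearMap.congr_fun hf p)
  refine ⟨g.hom, ?_⟩
  have : (K.d i (i+1)) g = ModuleCat.ofHom f := hg
  rw [ChainComplex.linearYonedaObj_d] at this
  ext p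
  have := congrArg (fun w => (ModuleCat.Hom.hom w) p) this
  exact this.symm

lemma ExAt.of_equiv {P : ProjectiveResolution (ModuleCat.of A C)}
    {M N : Type} [AddCommGroup M] [Module A M] [AddCommGroup N] [Module A N]
    (e : M ≃ₗ[A] N) {i : ℕ} (h : ExAt P M i) : ExAt P N i := by
  intro f hf
  obtain ⟨g, hg⟩ := h ((e.symm : N →ₗ[A] M) ∘ₗ f) (by
    rw [LinearMap.comp_assoc, hf, LinearMap.comp_zero])
  refine ⟨(e : M →ₗ[A] N) ∘ₗ g, ?_⟩
  ext p
  have := congrArg (fun (q : _ →ₗ[A] M) => e (q p)) hg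
  simpa using this

lemma ExAt.pi {P : ProjectiveResolution (ModuleCat.of A C)}
    {ι : Type} [Finite ι] {M : ι → Type} [∀ j, AddCommGroup (M j)] [∀ j, Module A (M j)]
    {i : ℕ} (h : ∀ j, ExAt P (M j) i) : ExAt P (∀ j, M j) i := by
  intro f hf
  have H : ∀ j, ∃ g : P.complex.X i →ₗ[A] M j,
      (LinearMap.proj j) ∘ₗ f = g ∘ₗ (P.complex.d (i+1) i).hom := by
    intro j
    refine h j ((LinearMap.proj j) ∘ₗ f) ?_
    rw [LinearMap.comp_assoc, hf, LinearMap.comp_zero]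
  choose g hg using H
  refine ⟨LinearMap.pi g, ?_⟩
  ext p j
  exact congrArg (fun (q : _ →ₗ[A] M j) => q p) (hg j)

lemma ExAt.of_ses {P : ProjectiveResolution (ModuleCat.of A C)}
    {M N : Type} [AddCommGroup M] [Module A M] [AddCommGroup N] [Module A N]
    (π : N →ₗ[A] M) (hπ : Function.Surjective π) {i : ℕ}
    (hK : ExAt P ↥(LinearMap.ker π) (i+1)) (hN : ExAt P N i) : ExAt P M i := by
  have hproj : Module.Projective A (P.complex.X (i+1)) :=
    (IsProjective.iff_projective _).mpr (P.projective (i+1))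
  intro f hf
  obtain ⟨g, hg⟩ := Module.projective_lifting_property π f hπ
  -- g ∘ d lands in ker π
  have hmem : ∀ p : P.complex.X (i+2),
      g ((P.complex.d (i+2) (i+1)).hom p) ∈ LinearMap.ker π := by
    intro p
    rw [LinearMap.mem_ker]
    have : (π ∘ₗ (g ∘ₗ (P.complex.d (i+2) (i+1)).hom)) p = 0 := by
      rw [← LinearMap.comp_assoc, hg, hf]; rfl
    simpa using this
  set h : P.complex.X (i+2) →ₗ[A] ↥(LinearMap.ker π) :=
    LinearMap.codRestrict (LinearMap.ker π)
      (g ∘ₗ (P.complex.d (i+2) (i+1)).hom) hmem with hh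
  obtain ⟨k, hk⟩ := hK h (by
    ext p
    show g ((P.complex.d (i+2) (i+1)).hom
      ((P.complex.d (i+3) (i+2)).hom p)) = (0 : N)
    have hdd : ((P.complex.d (i+2) (i+1)).hom ∘ₗ
        (P.complex.d (i+3) (i+2)).hom) p = 0 := by
      have := P.complex.d_comp_d (i+3) (i+2) (i+1)
      exact congrArg (fun (q : P.complex.X (i+3) ⟶ P.complex.X (i+1)) => q p) this
    rw [show (P.complex.d (i+2) (i+1)).hom
        ((P.complex.d (i+3) (i+2)).hom p) = 0 from hdd]
    simp)
  set g' : P.complex.X (i+1) →ₗ[A] N :=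
    g - (LinearMap.ker π).subtype ∘ₗ k with hg'
  obtain ⟨u, hu⟩ := hN g' (by
    ext p
    have h1 : g ((P.complex.d (i+2) (i+1)).hom p)
        = ((LinearMap.ker π).subtype ∘ₗ h) p := rfl
    have h2 : ((LinearMap.ker π).subtype ∘ₗ h) p
        = (LinearMap.ker π).subtype (k ((P.complex.d (i+2) (i+1)).hom p)) := by
      rw [hk]; rfl
    show g' ((P.complex.d (i+2) (i+1)).hom p) = 0
    rw [hg']
    simp only [LinearMap.sub_apply, LinearMap.coe_comp, Function.comp_apply]
    rw [h1, h2]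
    simp)
  refine ⟨π ∘ₗ u, ?_⟩
  ext p
  have : f p = π (g p) := by rw [← hg]; rfl
  rw [this]
  have hgp : g p = g' p + (LinearMap.ker π).subtype (k p) := by
    rw [hg']; simp
  rw [hgp, map_add]
  have : π ((LinearMap.ker π).subtype (k p)) = 0 := (k p).2
  rw [this, add_zero, hu]
  rfl

lemma ExAt.of_res {P : ProjectiveResolution (ModuleCat.of A C)}
    (hCE : ∀ i, ExAt P C i) :
    ∀ (s : ℕ) (M : Type) (_ : AddCommGroup M) (_ : Module A M)
      (_ : HasResolutionByOfLength A C M s) (i : ℕ), ExAt P M i := by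
  intro s
  induction s with
  | zero =>
    intro M _ _ hM i
    obtain ⟨n, d, ε, hn, hsurj, h0, hd⟩ := hM
    have hn1 : n 1 = 0 := hn 1 Nat.zero_lt_one
    have hinj : Function.Injective ε := by
      rw [← LinearMap.ker_eq_bot]
      ext y
      simp only [LinearMap.mem_ker, Submodule.mem_bot]
      constructor
      · intro hy
        obtain ⟨v, hv⟩ := (h0 y).1 hy
        have hv0 : v = 0 := by
          haveI : IsEmpty (Fin (n 1)) := by rw [hn1]; exact Fin.isEmpty
          exact Subsingleton.elim v 0
        rw [← hv, hv0, map_zero]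
      · rintro rfl; exact map_zero ε
    exact ExAt.of_equiv (LinearEquiv.ofBijective ε ⟨hinj, hsurj⟩)
      (ExAt.pi (fun _ => hCE i))
  | succ s ih =>
    intro M _ _ hM i
    obtain ⟨n, d, ε, hn, hsurj, h0, hd⟩ := hM
    set K := LinearMap.ker ε with hKdef
    have hd0K : ∀ v, d 0 v ∈ K := fun v =>
      LinearMap.mem_ker.mpr ((h0 (d 0 v)).2 ⟨v, rfl⟩)
    set ε' : (Fin (n 1) → C) →ₗ[A] ↥K := LinearMap.codRestrict K (d 0) hd0K with hε'
    have hε'surj : Function.Surjective ε' := by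
      rintro ⟨y, hy⟩
      obtain ⟨v, hv⟩ := (h0 y).1 (LinearMap.mem_ker.mp hy)
      exact ⟨v, Subtype.ext hv⟩
    have hKres : HasResolutionByOfLength A C (↥K) s := by
      refine ⟨fun i => n (i+1), fun i => d (i+1), ε', fun i hi => hn (i+1) (by omega),
        hε'surj, ?_, fun i => hd (i+1)⟩
      · intro y
        constructor
        · intro hy
          have : d 0 y = 0 := congrArg Subtype.val hy
          exact (hd 0 y).1 this
        · rintro ⟨v, rfl⟩
          exact Subtype.ext ((hd 0 (d 1 v)).2 ⟨v, rfl⟩)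
    have hKE : ∀ i, ExAt P (↥K) i := ih (↥K) _ _ hKres
    exact ExAt.of_ses ε hsurj (hKE (i+1)) (ExAt.pi (fun _ => hCE i))

/-- division by a nonzerodivisor -/
lemma exists_div {Y : Type} [AddCommGroup Y] [Module A Y] {x : A}
    (hx : Function.Injective (fun m : Y => x • m))
    {Z : Type} [AddCommGroup Z] [Module A Z] (w : Z →ₗ[A] Y)
    (hw : ∀ z, ∃ y, x • y = w z) : ∃ W : Z →ₗ[A] Y, ∀ z, x • W z = w z := by
  choose y hy using hw
  refine ⟨⟨⟨y, ?_⟩, ?_⟩, fun z => hy z⟩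
  · intro z₁ z₂
    apply hx
    show x • y (z₁ + z₂) = x • (y z₁ + y z₂)
    rw [hy, map_add, smul_add, hy, hy]
  · intro a z
    apply hx
    show x • y (a • z) = x • (a • y z)
    rw [hy, map_smul, smul_comm, hy]

lemma mem_xsmul_iff {Y : Type} [AddCommGroup Y] [Module A Y] (x : A) (m : Y) :
    m ∈ Ideal.span {x} • (⊤ : Submodule A Y) ↔ ∃ y : Y, x • y = m := by
  rw [Submodule.ideal_span_singleton_smul]
  constructor
  · intro hm
    obtain ⟨y, -, hy⟩ := Set.mem_smul_set.mp hm
    exact ⟨y, hy⟩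
  · rintro ⟨y, rfl⟩
    exact Submodule.smul_mem_pointwise_smul y x ⊤ trivial

lemma mkq_smul' {A : Type} [CommRing A] {M : Type} [AddCommGroup M] [Module A M]
    (I : Ideal A) (a : A) (q : M ⧸ (I • (⊤ : Submodule A M))) :
    (Ideal.Quotient.mk I a) • q = a • q := by
  obtain ⟨m, rfl⟩ := Submodule.Quotient.mk_surjective _ q
  rw [Module.Quotient.mk_smul_mk, Submodule.Quotient.mk_smul]

lemma x_smul_quot_zero {A : Type} [CommRing A] {M : Type} [AddCommGroup M] [Module A M]
    (x : A) (q : M ⧸ (Ideal.span {x} • (⊤ : Submodule A M))) : x • q = 0 := by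
  obtain ⟨m, rfl⟩ := Submodule.Quotient.mk_surjective _ q
  rw [← Submodule.Quotient.mk_smul, Submodule.Quotient.mk_eq_zero]
  exact (mem_xsmul_iff x _).mpr ⟨m, rfl⟩

lemma main_equiv {Y : Type} [AddCommGroup Y] [Module A Y] (x : A)
    (hxY : Function.Injective (fun m : Y => x • m))
    (hsurj : ∀ f : C →ₗ[A] (Y ⧸ (Ideal.span {x} • (⊤ : Submodule A Y))),
      ∃ g : C →ₗ[A] Y, (Ideal.span {x} • (⊤ : Submodule A Y)).mkQ ∘ₗ g = f) :
    Nonempty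
      (((C ⧸ (Ideal.span {x} • (⊤ : Submodule A C))) →ₗ[A ⧸ Ideal.span {x}]
          (Y ⧸ (Ideal.span {x} • (⊤ : Submodule A Y)))) ≃ₗ[A ⧸ Ideal.span {x}]
        ((C →ₗ[A] Y) ⧸ (Ideal.span {x} • (⊤ : Submodule A (C →ₗ[A] Y))))) := by
  classical
  let I : Ideal A := Ideal.span {x}
  let Φ : (C →ₗ[A] Y) →ₗ[A] (C →ₗ[A] Y ⧸ (I • (⊤ : Submodule A Y))) :=
    (LinearMap.llcomp A C Y _) (I • (⊤ : Submodule A Y)).mkQ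
  have hΦ : ∀ g : C →ₗ[A] Y, Φ g = (I • (⊤ : Submodule A Y)).mkQ ∘ₗ g := fun g => rfl
  have hΦsurj : Function.Surjective Φ := by
    intro f
    obtain ⟨g, hg⟩ := hsurj f
    exact ⟨g, hg⟩
  have hΦker : LinearMap.ker Φ = (I • (⊤ : Submodule A (C →ₗ[A] Y))) := by
    ext g
    rw [LinearMap.mem_ker, mem_xsmul_iff]
    constructor
    · intro hg
      have hw : ∀ c : C, ∃ y : Y, x • y = g c := by
        intro c
        rw [← mem_xsmul_iff, ← Submodule.Quotient.mk_eq_zero, ← Submodule.mkQ_apply]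
        exact congrArg (fun (w : C →ₗ[A] _) => w c) hg
      obtain ⟨W, hW⟩ := exists_div hxY g hw
      exact ⟨W, LinearMap.ext fun c => hW c⟩
    · rintro ⟨W, rfl⟩
      apply LinearMap.ext
      intro c
      show (I • (⊤ : Submodule A Y)).mkQ ((x • W) c) = 0
      rw [LinearMap.smul_apply, map_smul, Submodule.mkQ_apply]
      exact x_smul_quot_zero x _
  let E2 : ((C →ₗ[A] Y) ⧸ (I • (⊤ : Submodule A (C →ₗ[A] Y)))) ≃ₗ[A]
      (C →ₗ[A] Y ⧸ (I • (⊤ : Submodule A Y))) :=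
    (Submodule.quotEquivOfEq _ _ hΦker.symm).trans (Φ.quotKerEquivOfSurjective hΦsurj)
  -- F : A/I-linear homs downstairs to A-linear homs
  let F : ((C ⧸ (I • (⊤ : Submodule A C))) →ₗ[A ⧸ I] (Y ⧸ (I • (⊤ : Submodule A Y)))) →
      (C →ₗ[A] Y ⧸ (I • (⊤ : Submodule A Y))) := fun f =>
    { toFun := fun c => f (Submodule.Quotient.mk c)
      map_add' := fun c₁ c₂ => by rw [← map_add]; rfl
      map_smul' := fun a c => by
        show f (Submodule.Quotient.mk (a • c)) = a • f (Submodule.Quotient.mk c)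
        rw [← Module.Quotient.mk_smul_mk, map_smul, mkq_smul'] }
  have hG : ∀ g : C →ₗ[A] Y ⧸ (I • (⊤ : Submodule A Y)),
      (I • (⊤ : Submodule A C)) ≤ LinearMap.ker g := by
    intro g m hm
    obtain ⟨c, rfl⟩ := (mem_xsmul_iff x m).mp hm
    rw [LinearMap.mem_ker, map_smul]
    exact x_smul_quot_zero x _
  let G : (C →ₗ[A] Y ⧸ (I • (⊤ : Submodule A Y))) →
      ((C ⧸ (I • (⊤ : Submodule A C))) →ₗ[A ⧸ I] (Y ⧸ (I • (⊤ : Submodule A Y)))) := fun g =>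
    { toFun := ⇑(Submodule.liftQ (I • (⊤ : Submodule A C)) g (hG g))
      map_add' := map_add _
      map_smul' := fun r m => by
        obtain ⟨a, rfl⟩ := Ideal.Quotient.mk_surjective r
        obtain ⟨c, rfl⟩ := Submodule.Quotient.mk_surjective _ m
        show Submodule.liftQ _ g (hG g) ((Ideal.Quotient.mk I a) • Submodule.Quotient.mk c)
          = (Ideal.Quotient.mk I a) • Submodule.liftQ _ g (hG g) (Submodule.Quotient.mk c)
        rw [Module.Quotient.mk_smul_mk, Submodule.liftQ_apply, Submodule.liftQ_apply, map_smul,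
          mkq_smul'] }
  refine ⟨⟨⟨⟨fun f => E2.symm (F f), ?_⟩, ?_⟩, fun q => G (E2 q), ?_, ?_⟩⟩
  · intro f₁ f₂
    show E2.symm (F (f₁ + f₂)) = E2.symm (F f₁) + E2.symm (F f₂)
    rw [← map_add]
    congr 1
  · intro r f
    obtain ⟨a, rfl⟩ := Ideal.Quotient.mk_surjective r
    show E2.symm (F ((Ideal.Quotient.mk I a) • f)) = (Ideal.Quotient.mk I a) • E2.symm (F f)
    have h1 : F ((Ideal.Quotient.mk I a) • f) = a • F f := by
      apply LinearMap.ext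
      intro c
      show ((Ideal.Quotient.mk I a) • f) (Submodule.Quotient.mk c) = a • f (Submodule.Quotient.mk c)
      rw [LinearMap.smul_apply, mkq_smul']
    rw [h1, map_smul, mkq_smul']
  · intro f
    show G (E2 (E2.symm (F f))) = f
    rw [E2.apply_symm_apply]
    apply LinearMap.ext
    intro m
    obtain ⟨c, rfl⟩ := Submodule.Quotient.mk_surjective _ m
    rfl
  · intro q
    show E2.symm (F (G (E2 q))) = q
    have : F (G (E2 q)) = E2 q := by
      apply LinearMap.ext; intro c; rfl
    rw [this, E2.symm_apply_apply]

lemma phi_surjective {Y : Type} [AddCommGroup Y] [Module A Y]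
    (P : ProjectiveResolution (ModuleCat.of A C))
    (hEY : ExAt P Y 0) {x : A} (hxY : Function.Injective (fun m : Y => x • m))
    (f : C →ₗ[A] (Y ⧸ (Ideal.span {x} • (⊤ : Submodule A Y)))) :
    ∃ g : C →ₗ[A] Y, (Ideal.span {x} • (⊤ : Submodule A Y)).mkQ ∘ₗ g = f := by
  revert f
  set I : Submodule A Y := Ideal.span {x} • (⊤ : Submodule A Y) with hI
  intro f
  set ε₀ : P.complex.X 0 →ₗ[A] C := (P.π.f 0 : P.complex.X 0 ⟶ ModuleCat.of A C).hom with hε₀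
  have hε₀surj : Function.Surjective ε₀ :=
    (ModuleCat.epi_iff_surjective (P.π.f 0)).mp inferInstance
  have hexact : ∀ p : P.complex.X 0, ε₀ p = 0 →
      ∃ q : P.complex.X 1, (P.complex.d 1 0).hom q = p := by
    intro p hp
    have := P.exact₀
    rw [ShortComplex.moduleCat_exact_iff] at this
    exact this p hp
  have hproj0 : Module.Projective A (P.complex.X 0) :=
    (IsProjective.iff_projective _).mpr (P.projective 0)
  -- lift f ∘ ε₀ through mkQ
  obtain ⟨g₀, hg₀⟩ := Module.projective_lifting_property I.mkQ (f ∘ₗ ε₀)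
    (Submodule.mkQ_surjective I)
  -- g₀ ∘ d lands in xY
  have hmem : ∀ q : P.complex.X 1, ∃ y, x • y = g₀ ((P.complex.d 1 0).hom q) := by
    intro q
    rw [← mem_xsmul_iff, ← Submodule.Quotient.mk_eq_zero, ← Submodule.mkQ_apply]
    have h1 : (I.mkQ ∘ₗ (g₀ ∘ₗ (P.complex.d 1 0).hom)) q
        = ((f ∘ₗ ε₀) ∘ₗ (P.complex.d 1 0).hom) q := by
      rw [← LinearMap.comp_assoc, hg₀]
    have h2 : ε₀ ((P.complex.d 1 0).hom q) = 0 := by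
      have := P.complex_d_comp_π_f_zero
      exact congrArg (fun (u : P.complex.X 1 ⟶ ModuleCat.of A C) => u q) this
    have h3 : ((f ∘ₗ ε₀) ∘ₗ (P.complex.d 1 0).hom) q = 0 := by
      show f (ε₀ ((P.complex.d 1 0).hom q)) = 0
      rw [h2, map_zero]
    rw [← h3, ← h1]; rfl
  obtain ⟨h, hh⟩ := exists_div hxY (g₀ ∘ₗ (P.complex.d 1 0).hom) hmem
  -- h is a cocycle
  obtain ⟨u, hu⟩ := hEY h (by
    ext q
    show h ((P.complex.d 2 1).hom q) = 0
    apply hxY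
    show x • h ((P.complex.d 2 1).hom q) = x • (0 : Y)
    rw [hh, smul_zero]
    show (g₀ ∘ₗ ((P.complex.d 1 0).hom ∘ₗ (P.complex.d 2 1).hom)) q = 0
    have hdd : ((P.complex.d 2 1) ≫ (P.complex.d 1 0) :
        P.complex.X 2 ⟶ P.complex.X 0) = 0 := P.complex.d_comp_d 2 1 0
    have : (P.complex.d 1 0).hom ((P.complex.d 2 1).hom q) = 0 :=
      congrArg (fun (w : P.complex.X 2 ⟶ P.complex.X 0) => w.hom q) hdd
    show g₀ ((P.complex.d 1 0).hom ((P.complex.d 2 1).hom q)) = 0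
    rw [this, map_zero])
  -- g₀ - x • u kills ker ε₀
  set g₁ : P.complex.X 0 →ₗ[A] Y := g₀ - x • u with hg₁
  have hker : LinearMap.ker ε₀ ≤ LinearMap.ker g₁ := by
    intro p hp
    obtain ⟨q, rfl⟩ := hexact p (LinearMap.mem_ker.mp hp)
    rw [LinearMap.mem_ker, hg₁]
    simp only [LinearMap.sub_apply, LinearMap.smul_apply]
    have h4 : u ((P.complex.d 1 0).hom q) = h q := by
      have := congrArg (fun (w : P.complex.X 1 →ₗ[A] Y) => w q) hu
      exact this.symm
    rw [h4, hh]
    show (g₀ ∘ₗ (P.complex.d 1 0).hom) q - (g₀ ∘ₗ (P.complex.d 1 0).hom) q = 0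
    rw [sub_self]
  -- factor through C
  set e := ε₀.quotKerEquivOfSurjective hε₀surj with he
  set g : C →ₗ[A] Y := ((LinearMap.ker ε₀).liftQ g₁ hker) ∘ₗ (e.symm : C →ₗ[A] _) with hg
  refine ⟨g, ?_⟩
  ext c
  obtain ⟨p, rfl⟩ := hε₀surj c
  have hes : e.symm (ε₀ p) = Submodule.Quotient.mk p := by
    apply e.injective
    rw [LinearEquiv.apply_symm_apply]
    rfl
  show I.mkQ (g (ε₀ p)) = f (ε₀ p)
  rw [hg]
  show I.mkQ (((LinearMap.ker ε₀).liftQ g₁ hker) (e.symm (ε₀ p))) = f (ε₀ p)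
  rw [hes]
  show I.mkQ (g₁ p) = f (ε₀ p)
  rw [hg₁]
  have : I.mkQ (g₀ p - x • u p) = I.mkQ (g₀ p) := by
    rw [map_sub, sub_eq_self, Submodule.mkQ_apply, Submodule.Quotient.mk_eq_zero]
    exact (mem_xsmul_iff x _).mpr ⟨u p, rfl⟩
  show I.mkQ (g₀ p - x • u p) = f (ε₀ p)
  rw [this]
  exact congrArg (fun (w : P.complex.X 0 →ₗ[A] _) => w p) hg₀

end Aux

/-- If `C` is a semidualizing module over the commutative noetherian local ring `A`, `Y` is
a finitely generated module of finite `C`-dimension and `x` is a nonzerodivisor on `Y`,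
then `Hom_{A/(x)}(C/xC, Y/xY) ≅ Hom_A(C,Y)/x·Hom_A(C,Y)` as `A/(x)`-modules. -/
theorem hom_quotient_iso
    (A : Type) [CommRing A] [IsNoetherianRing A] [IsLocalRing A]
    (C : Type) [AddCommGroup C] [Module A C] [Module.Finite A C]
    (hC : IsSemidualizing A C)
    (Y : Type) [AddCommGroup Y] [Module A Y] [Module.Finite A Y]
    (hY : HasFiniteCDim A C Y)
    (x : A) (hxY : Function.Injective (fun m : Y => x • m)) :
    Nonempty
      (((C ⧸ (Ideal.span {x} • (⊤ : Submodule A C))) →ₗ[A ⧸ Ideal.span {x}]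
          (Y ⧸ (Ideal.span {x} • (⊤ : Submodule A Y)))) ≃ₗ[A ⧸ Ideal.span {x}]
        ((C →ₗ[A] Y) ⧸ (Ideal.span {x} • (⊤ : Submodule A (C →ₗ[A] Y))))) := by
  obtain ⟨-, hC2⟩ := hC
  obtain ⟨s, hres⟩ := hY
  obtain ⟨P⟩ := HasProjectiveResolution.out (Z := ModuleCat.of A C)
  have hCE : ∀ i, ExAt P C i := fun i =>
    exAt_of_subsingleton_ext P C i (hC2 (i+1) (Nat.succ_pos i))
  have hEY : ExAt P Y 0 := ExAt.of_res hCE s Y _ _ hres 0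
  exact main_equiv x hxY (fun f => phi_surjective P hEY hxY f)
end
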